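/- arXiv:2210.00994 — 5 statements merged into one kernel-verified Lean document; each statement's English description precedes it below -/
import Mathlib

section
/- Let a, t, H₁, H₂ be real numbers with 0 < a < t and 0 < H₁ < H₂. Assume that for every x ∈ (a, t) one has 0 < H₂·x² + t − H₂·t² and H₁·x² + t − H₁·t² < x (so that D(H₁,t,x) and D(H₂,t,x) are defined and positive for all x ∈ (a,t)), and assume that both functions x ↦ 1/D(H₁,t,x) and x ↦ 1/D(H₂,t,x) are interval integrable on (a, t). Then ∫_a^t 1/D(H₂,t,x) dx < ∫_a^t 1/D(H₁,t,x) dx; that is, the quantity x*(a,H,t) = ∫_a^t dx/D(H,t,x) is strictly decreasing in H. -/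
/-- `D(H,t,x) = √((x/(H x² + t − H t²))² − 1)`. -/
noncomputable def delaunayD (H t x : ℝ) : ℝ :=
  Real.sqrt ((x / (H * x ^ 2 + t - H * t ^ 2)) ^ 2 - 1)

/-- The quantity `x*(a,H,t) = ∫_a^t dx / D(H,t,x)` is strictly decreasing in `H`. -/
theorem xstar_strictAnti_in_H (a t H₁ H₂ : ℝ) (ha : 0 < a) (hat : a < t)
    (hH₁ : 0 < H₁) (hH : H₁ < H₂)
    (hpos : ∀ x ∈ Set.Ioo a t, 0 < H₂ * x ^ 2 + t - H₂ * t ^ 2)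
    (hlt : ∀ x ∈ Set.Ioo a t, H₁ * x ^ 2 + t - H₁ * t ^ 2 < x)
    (hint₁ : IntervalIntegrable (fun x => 1 / delaunayD H₁ t x) MeasureTheory.volume a t)
    (hint₂ : IntervalIntegrable (fun x => 1 / delaunayD H₂ t x) MeasureTheory.volume a t) :
    (∫ x in a..t, 1 / delaunayD H₂ t x) < ∫ x in a..t, 1 / delaunayD H₁ t x := by
  have key : ∀ x ∈ Set.Ioo a t, 1 / delaunayD H₂ t x < 1 / delaunayD H₁ t x := by
    intro x hx
    obtain ⟨hax, hxt⟩ := hx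
    have hx0 : 0 < x := ha.trans hax
    have hq2 : 0 < H₂ * x ^ 2 + t - H₂ * t ^ 2 := hpos x ⟨hax, hxt⟩
    have hq1x : H₁ * x ^ 2 + t - H₁ * t ^ 2 < x := hlt x ⟨hax, hxt⟩
    have hq21 : H₂ * x ^ 2 + t - H₂ * t ^ 2 < H₁ * x ^ 2 + t - H₁ * t ^ 2 := by nlinarith
    have hq1 : 0 < H₁ * x ^ 2 + t - H₁ * t ^ 2 := hq2.trans hq21
    have h1 : 1 < x / (H₁ * x ^ 2 + t - H₁ * t ^ 2) := (one_lt_div hq1).2 hq1x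
    have h2 : x / (H₁ * x ^ 2 + t - H₁ * t ^ 2) < x / (H₂ * x ^ 2 + t - H₂ * t ^ 2) :=
      div_lt_div_of_pos_left hx0 hq2 hq21
    have hD1pos : 0 < delaunayD H₁ t x := Real.sqrt_pos.2 (by nlinarith)
    have hDlt : delaunayD H₁ t x < delaunayD H₂ t x := by
      apply Real.sqrt_lt_sqrt (by nlinarith)
      nlinarith
    exact one_div_lt_one_div_of_lt hD1pos hDlt
  have hr : MeasureTheory.volume.restrict (Set.Ioc a t)
      = MeasureTheory.volume.restrict (Set.Ioo a t) :=
    (MeasureTheory.Measure.restrict_congr_set MeasureTheory.Ioo_ae_eq_Ioc).symm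
  apply intervalIntegral.integral_lt_integral_of_ae_le_of_measure_setOf_lt_ne_zero hat.le
    hint₂ hint₁
  · rw [hr]
    filter_upwards [MeasureTheory.ae_restrict_mem measurableSet_Ioo] with x hx
    exact (key x hx).le
  · rw [hr, MeasureTheory.Measure.restrict_apply' measurableSet_Ioo]
    have hsub : Set.Ioo a t ⊆ {x | 1 / delaunayD H₂ t x < 1 / delaunayD H₁ t x} ∩ Set.Ioo a t :=
      fun x hx => ⟨key x hx, hx⟩
    intro h
    have := MeasureTheory.measure_mono_null hsub h
    rw [Real.volume_Ioo] at this
    simp [ENNReal.ofReal_eq_zero] at this; linarith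
end

section
/- For every real t with 0 < t < 1 − √3/2, one has ∫_t^{√3/2} ((x/(x² + t − t²))² − 1)^{−1/2} dx > 1/2. (Geometrically: the undulary with unit-period generating ellipse whose neck height is t, i.e. the solution of dx₁/dx₃ = √((x₁/(x₁² + t − t²))² − 1) with x₁(0) = t, satisfies x₁ < √3/2 at x₃ = 1/2.) -/
/-!
Write `a = t - t²` and `D = x² + a`, so that the integrand is `D / √(x² - D²)`. Since `D ≥ x²`,
`√(x² - D²) ≤ x √(1 - x²)`, hence the integrand dominates `x / √(1 - x²) + a / x`, whose primitive
`a log x - √(1 - x²)` is elementary. Over `[t, √3/2]` this gives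
`a log (√3 / (2t)) + √(1 - t²) - 1/2`, which exceeds `1/2` because `√3 / (2t) > e` and
`√(1 - t²) ≥ 1 - t²`. The integral converges because `x² - D² = (x - t)(1 - t - x)(x + D)` vanishes
only to first order at `x = t`.
-/

open MeasureTheory Set Real

theorem intervalIntegrable_of_norm_le_mul_rpow_sub {E : Type*} [NormedAddCommGroup E]
    {f : ℝ → E} {a b C r : ℝ} (hr : -1 < r) (hab : a ≤ b)
    (hf : AEStronglyMeasurable f (volume.restrict (Ioc a b)))
    (hle : ∀ x ∈ Ioc a b, ‖f x‖ ≤ C * (x - a) ^ r) :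
    IntervalIntegrable f volume a b := by
  have hmaj : IntervalIntegrable (fun x => C * (x - a) ^ r) volume a b := by
    have hpow := intervalIntegral.intervalIntegrable_rpow' hr (a := 0) (b := b - a)
    simpa using (hpow.comp_sub_right a).const_mul C
  rw [intervalIntegrable_iff_integrableOn_Ioc_of_le hab] at hmaj ⊢
  exact hmaj.mono' hf ((ae_restrict_iff' measurableSet_Ioc).2 (.of_forall hle))

theorem one_div_sqrt_div_sq_sub_one {x D : ℝ} (hD : 0 < D) :
    1 / √((x / D) ^ 2 - 1) = D / √(x ^ 2 - D ^ 2) := by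
  rw [show (x / D) ^ 2 - 1 = (x ^ 2 - D ^ 2) / D ^ 2 by field_simp,
    sqrt_div' _ (by positivity), sqrt_sq hD.le, one_div_div]

theorem hasDerivAt_mul_log_sub_sqrt_one_sub_sq (a : ℝ) {x : ℝ} (hx : x ∈ Ioo 0 1) :
    HasDerivAt (fun y => a * log y - √(1 - y ^ 2)) (x / √(1 - x ^ 2) + a / x) x := by
  have h1x : 0 < 1 - x ^ 2 := by nlinarith [hx.1, hx.2]
  refine (((hasDerivAt_log hx.1.ne').const_mul a).sub
    (((hasDerivAt_pow 2 x).const_sub 1).sqrt h1x.ne')).congr_deriv ?_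
  have : √(1 - x ^ 2) ≠ 0 := by positivity
  have : x ≠ 0 := hx.1.ne'
  field_simp
  ring

section UnitInterval

variable (a : ℝ) {t b : ℝ} (h : uIcc t b ⊆ Ioo 0 1)
include h

theorem intervalIntegrable_div_sqrt_one_sub_sq_add_div :
    IntervalIntegrable (fun x => x / √(1 - x ^ 2) + a / x) volume t b := by
  refine ContinuousOn.intervalIntegrable fun x hx => ContinuousAt.continuousWithinAt ?_
  obtain ⟨hx0, hx1⟩ := h hx
  have h1x : 0 < 1 - x ^ 2 := by nlinarith
  fun_prop (disch := positivity)

theorem integral_div_sqrt_one_sub_sq_add_div :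
    ∫ x in t..b, (x / √(1 - x ^ 2) + a / x) =
      a * (log b - log t) + √(1 - t ^ 2) - √(1 - b ^ 2) := by
  rw [intervalIntegral.integral_eq_sub_of_hasDerivAt
    (fun x hx => hasDerivAt_mul_log_sub_sqrt_one_sub_sq a (h hx))
    (intervalIntegrable_div_sqrt_one_sub_sq_add_div a h)]
  ring

end UnitInterval

noncomputable def undularyIntegrand (t x : ℝ) : ℝ :=
  1 / √((x / (x ^ 2 + t - t ^ 2)) ^ 2 - 1)

theorem undularyIntegrand_eq {t : ℝ} (x : ℝ) (ht0 : 0 < t) (ht1 : t < 1) :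
    undularyIntegrand t x = (x ^ 2 + t - t ^ 2) / √(x ^ 2 - (x ^ 2 + t - t ^ 2) ^ 2) :=
  one_div_sqrt_div_sq_sub_one (by nlinarith)

theorem div_sqrt_one_sub_sq_add_div_le_undularyIntegrand {t x : ℝ} (ht0 : 0 < t)
    (hx : x ∈ Ioo t (1 - t)) :
    x / √(1 - x ^ 2) + (t - t ^ 2) / x ≤ undularyIntegrand t x := by
  obtain ⟨hxt, hx1⟩ := hx
  have hx0 : 0 < x := ht0.trans hxt
  rw [undularyIntegrand_eq x ht0 (by linarith)]
  set s := √(1 - x ^ 2)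
  have hs0 : 0 < s := sqrt_pos.2 (by nlinarith)
  have hs1 : s ≤ 1 := sqrt_le_one.2 (by nlinarith)
  have hsq : s ^ 2 = 1 - x ^ 2 := sq_sqrt (by nlinarith)
  set D := x ^ 2 + t - t ^ 2
  have hD0 : x ^ 2 ≤ D := by nlinarith
  have hDx : D < x := by nlinarith
  have hroot_pos : 0 < √(x ^ 2 - D ^ 2) := sqrt_pos.2 (by nlinarith)
  have hroot_le : √(x ^ 2 - D ^ 2) ≤ x * s := by
    rw [← sqrt_sq (by positivity : 0 ≤ x * s)]
    exact sqrt_le_sqrt (by nlinarith)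
  calc x / s + (t - t ^ 2) / x ≤ x / s + (t - t ^ 2) / (x * s) := by
        gcongr
        · nlinarith
        · nlinarith
    _ = D / (x * s) := by field_simp; ring
    _ ≤ D / √(x ^ 2 - D ^ 2) := by gcongr; nlinarith

theorem undularyIntegrand_le {t b x : ℝ} (ht0 : 0 < t) (hb : b < 1 - t) (hx : x ∈ Ioc t b) :
    undularyIntegrand t x ≤ (√((1 - t - b) * t * (x - t)))⁻¹ := by
  obtain ⟨hxt, hxb⟩ := hx
  rw [undularyIntegrand_eq x ht0 (by linarith)]
  set D := x ^ 2 + t - t ^ 2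
  have hD1 : D ≤ 1 := by nlinarith
  have hlow_pos : 0 < (1 - t - b) * t * (x - t) := by
    have : 0 < 1 - t - b := by linarith
    have : 0 < x - t := by linarith
    positivity
  have hlow : (1 - t - b) * t * (x - t) ≤ x ^ 2 - D ^ 2 := by
    rw [show x ^ 2 - D ^ 2 = (1 - t - x) * (x + D) * (x - t) by ring]
    gcongr
    · linarith
    · nlinarith
  calc D / √(x ^ 2 - D ^ 2) ≤ 1 / √(x ^ 2 - D ^ 2) := by gcongr
    _ ≤ 1 / √((1 - t - b) * t * (x - t)) := by gcongr
    _ = _ := one_div _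

theorem intervalIntegrable_undularyIntegrand {t b : ℝ} (ht0 : 0 < t) (htb : t ≤ b)
    (hb : b < 1 - t) : IntervalIntegrable (undularyIntegrand t) volume t b := by
  refine intervalIntegrable_of_norm_le_mul_rpow_sub (C := (√((1 - t - b) * t))⁻¹)
    (r := -(1 / 2)) (by norm_num) htb ?_ fun x hx => ?_
  · exact Measurable.aestronglyMeasurable (by unfold undularyIntegrand; fun_prop)
  · have hbound := undularyIntegrand_le ht0 hb hx
    rw [norm_of_nonneg (by unfold undularyIntegrand; positivity)]
    rwa [rpow_neg (by linarith [hx.1]), ← sqrt_eq_rpow, ← mul_inv, ← sqrt_mul (by nlinarith)]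

theorem one_lt_mul_log_sub_log_add_sqrt {t b : ℝ} (ht0 : 0 < t) (ht : t ≤ 1 / 2)
    (hb : exp 1 * t < b) : 1 < (t - t ^ 2) * (log b - log t) + √(1 - t ^ 2) := by
  have hb0 : 0 < b := lt_trans (by positivity) hb
  have hlog : 1 < log b - log t := by
    rw [← log_div hb0.ne' ht0.ne', lt_log_iff_exp_lt (by positivity), lt_div_iff₀ ht0]
    exact hb
  have hsqrt : 1 - t ^ 2 ≤ √(1 - t ^ 2) := le_sqrt_self_iff.2 (by nlinarith)
  nlinarith [mul_lt_mul_of_pos_left hlog (show 0 < t - t ^ 2 by nlinarith)]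

/-- The undulary with neck height `t`, solving `dx₁/dx₃ = √((x₁/(x₁²+t−t²))²−1)`,
`x₁(0) = t`, satisfies `x₁ < √3/2` at `x₃ = 1/2`: the inverse function's value
`x₃` at `x₁ = √3/2`, given by the integral, exceeds `1/2`. -/
theorem undulary_integral_gt_half (t : ℝ) (h0 : 0 < t)
    (h1 : t < 1 - Real.sqrt 3 / 2) :
    1 / 2 < ∫ x in t..(Real.sqrt 3 / 2),
      1 / Real.sqrt ((x / (x ^ 2 + t - t ^ 2)) ^ 2 - 1) := by
  have hsqrt3 : 1.732 < √3 ∧ √3 < 1.734 := by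
    constructor <;> nlinarith [sq_sqrt (show (0 : ℝ) ≤ 3 by norm_num), sqrt_nonneg 3]
  set b := √3 / 2 with hb
  have hb_sq : √(1 - b ^ 2) = 1 / 2 := by
    rw [div_pow, sq_sqrt (by norm_num), show (1 : ℝ) - 3 / 2 ^ 2 = (1 / 2) ^ 2 by norm_num,
      sqrt_sq (by norm_num)]
  have htb : t < b := by linarith
  have hunit : uIcc t b ⊆ Ioo 0 1 := by
    rw [uIcc_of_le htb.le]
    exact Icc_subset_Ioo h0 (by linarith)
  have hlog := one_lt_mul_log_sub_log_add_sqrt h0 (by linarith)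
    (by nlinarith [exp_one_lt_d9] : exp 1 * t < b)
  calc 1 / 2 < (t - t ^ 2) * (log b - log t) + √(1 - t ^ 2) - √(1 - b ^ 2) := by linarith
    _ = ∫ x in t..b, (x / √(1 - x ^ 2) + (t - t ^ 2) / x) :=
      (integral_div_sqrt_one_sub_sq_add_div _ hunit).symm
    _ ≤ ∫ x in t..b, undularyIntegrand t x :=
      intervalIntegral.integral_mono_on_of_le_Ioo htb.le
        (intervalIntegrable_div_sqrt_one_sub_sq_add_div _ hunit)
        (intervalIntegrable_undularyIntegrand h0 htb.le (by linarith))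
        fun x hx => div_sqrt_one_sub_sq_add_div_le_undularyIntegrand h0 ⟨hx.1, by linarith [hx.2]⟩
end

section
/- For every real a with 0 < a < 1, the function t ↦ x_a(t) = ∫_a^t ((x/(x² + t − t²))² − 1)^{−1/2} dx, which is defined for all t in a neighborhood of 1 satisfying |1 − t| < a < t, is differentiable at t = 1 with derivative equal to g(a) = −log((1 + √(1 − a²))/a) + 1/√(1 − a²). -/
open Real intervalIntegral MeasureTheory Set
open scoped Interval
set_option maxHeartbeats 1000000
noncomputable section
namespace XA

def thf (a t : ℝ) : ℝ := Real.arcsin (Real.sqrt ((t^2 - a^2)/(2*t - 1)))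

def ph (t s : ℝ) : ℝ := t^2 - (2*t-1) * Real.sin s ^ 2
def ff (t s : ℝ) : ℝ := Real.sqrt (ph t s) + (t - t^2) / Real.sqrt (ph t s)
def ff' (t s : ℝ) : ℝ :=
  (2*t - 2*Real.sin s^2) / (2 * Real.sqrt (ph t s)) +
    ((1-2*t) * Real.sqrt (ph t s)
      - (t - t^2) * ((2*t - 2*Real.sin s^2) / (2 * Real.sqrt (ph t s)))) / Real.sqrt (ph t s) ^ 2

variable {a : ℝ}

lemma sa_pos (ha0 : 0 < a) (ha1 : a < 1) : 0 < Real.sqrt (1 - a^2) :=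
  Real.sqrt_pos.2 (by nlinarith)

lemma sa_lt_one (ha0 : 0 < a) (ha1 : a < 1) : Real.sqrt (1 - a^2) < 1 := by
  have h : (1:ℝ) - a^2 < 1 := by nlinarith
  calc Real.sqrt (1-a^2) < Real.sqrt 1 := Real.sqrt_lt_sqrt (by nlinarith) h
  _ = 1 := Real.sqrt_one

lemma sin_Th (ha0 : 0 < a) (ha1 : a < 1) : Real.sin ((Real.arcsin (Real.sqrt (1-a^2)))) = Real.sqrt (1 - a^2) :=
  Real.sin_arcsin (le_trans (by norm_num) (Real.sqrt_nonneg _)) (sa_lt_one ha0 ha1).le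

lemma cos_Th (ha0 : 0 < a) (ha1 : a < 1) : Real.cos ((Real.arcsin (Real.sqrt (1-a^2)))) = a := by
  rw [Real.cos_arcsin, Real.sq_sqrt (by nlinarith)]
  rw [show 1 - (1 - a^2) = a^2 by ring, Real.sqrt_sq ha0.le]

lemma Th_pos (ha0 : 0 < a) (ha1 : a < 1) : 0 < (Real.arcsin (Real.sqrt (1-a^2))) :=
  Real.arcsin_pos.2 (sa_pos ha0 ha1)

lemma Th_lt (ha0 : 0 < a) (ha1 : a < 1) : (Real.arcsin (Real.sqrt (1-a^2))) < π/2 :=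
  Real.arcsin_lt_pi_div_two.2 (sa_lt_one ha0 ha1)

lemma Th_lt_Th' (ha0 : 0 < a) (ha1 : a < 1) : (Real.arcsin (Real.sqrt (1-a^2))) < ((Real.arcsin (Real.sqrt (1-a^2)) + π/2)/2) := by
  have := Th_lt ha0 ha1; linarith

lemma Th'_lt (ha0 : 0 < a) (ha1 : a < 1) : ((Real.arcsin (Real.sqrt (1-a^2)) + π/2)/2) < π/2 := by
  have := Th_lt ha0 ha1; linarith

lemma Th'_pos (ha0 : 0 < a) (ha1 : a < 1) : 0 < ((Real.arcsin (Real.sqrt (1-a^2)) + π/2)/2) := by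
  have := Th_pos ha0 ha1; have := Th_lt ha0 ha1; nlinarith [Real.pi_pos]

lemma cos_Th'_pos (ha0 : 0 < a) (ha1 : a < 1) : 0 < Real.cos (((Real.arcsin (Real.sqrt (1-a^2)) + π/2)/2)) :=
  Real.cos_pos_of_mem_Ioo ⟨by linarith [Th'_pos ha0 ha1, Real.pi_pos], Th'_lt ha0 ha1⟩

/-- uniform lower bound for ph on the relevant region -/
lemma ph_ge (ha0 : 0 < a) (ha1 : a < 1) {t s : ℝ} (ht : |t - 1| < 1/4)
    (hs0 : 0 ≤ s) (hs1 : s ≤ ((Real.arcsin (Real.sqrt (1-a^2)) + π/2)/2)) : Real.cos (((Real.arcsin (Real.sqrt (1-a^2)) + π/2)/2)) ^ 2 / 2 ≤ ph t s := by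
  have hT2 : ((Real.arcsin (Real.sqrt (1-a^2)) + π/2)/2) < π/2 := Th'_lt ha0 ha1
  have hsin : Real.sin s ≤ Real.sin (((Real.arcsin (Real.sqrt (1-a^2)) + π/2)/2)) := by
    apply Real.strictMonoOn_sin.monotoneOn
    · constructor <;> [linarith; linarith]
    · constructor <;> [linarith [Th'_pos ha0 ha1]; linarith]
    · exact hs1
  have hsin0 : 0 ≤ Real.sin s := Real.sin_nonneg_of_nonneg_of_le_pi hs0 (by linarith [Real.pi_pos])
  have hsq : Real.sin s ^ 2 ≤ Real.sin (((Real.arcsin (Real.sqrt (1-a^2)) + π/2)/2)) ^ 2 := by nlinarith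
  have hpy : Real.sin (((Real.arcsin (Real.sqrt (1-a^2)) + π/2)/2)) ^ 2 + Real.cos (((Real.arcsin (Real.sqrt (1-a^2)) + π/2)/2)) ^ 2 = 1 := Real.sin_sq_add_cos_sq _
  have ht1 : 1/2 ≤ 2*t - 1 := by rw [abs_lt] at ht; linarith
  have h2 : (2*t-1) * Real.sin s ^ 2 ≤ (2*t-1) * Real.sin (((Real.arcsin (Real.sqrt (1-a^2)) + π/2)/2)) ^ 2 := by nlinarith
  rw [ph]
  nlinarith [sq_nonneg (t - 1), cos_Th'_pos ha0 ha1]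

lemma ph_pos (ha0 : 0 < a) (ha1 : a < 1) {t s : ℝ} (ht : |t - 1| < 1/4)
    (hs0 : 0 ≤ s) (hs1 : s ≤ ((Real.arcsin (Real.sqrt (1-a^2)) + π/2)/2)) : 0 < ph t s :=
  lt_of_lt_of_le (by have := cos_Th'_pos ha0 ha1; positivity) (ph_ge ha0 ha1 ht hs0 hs1)


lemma hasDerivAt_ph (t s : ℝ) :
    HasDerivAt (fun t => ph t s) (2*t - 2*Real.sin s^2) t := by
  have h1 : HasDerivAt (fun t : ℝ => t^2 - (2*t-1) * Real.sin s ^ 2)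
      (2*t - ((2:ℝ)) * Real.sin s ^ 2) t := by
    have := ((hasDerivAt_pow 2 t).sub (((hasDerivAt_id t).const_mul 2).sub_const 1 |>.mul_const
      (Real.sin s ^ 2)))
    refine this.congr_deriv ?_
    ring
  exact h1

lemma hasDerivAt_ff {t s : ℝ} (h : 0 < ph t s) :
    HasDerivAt (fun t => ff t s) (ff' t s) t := by
  have hs : Real.sqrt (ph t s) ≠ 0 := (Real.sqrt_pos.2 h).ne'
  have h1 : HasDerivAt (fun t => Real.sqrt (ph t s))
      ((2*t - 2*Real.sin s^2) / (2 * Real.sqrt (ph t s))) t :=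
    (hasDerivAt_ph t s).sqrt h.ne'
  have h2 : HasDerivAt (fun t : ℝ => t - t^2) (1 - 2*t) t := by
    have := (hasDerivAt_id t).sub (hasDerivAt_pow 2 t)
    refine this.congr_deriv ?_
    simp
  exact (h1.add (h2.div h1 hs))

lemma ff'_one {s : ℝ} (hc : 0 < Real.cos s) :
    ff' 1 s = Real.cos s - (Real.cos s)⁻¹ := by
  have hph : ph 1 s = Real.cos s ^ 2 := by
    rw [ph]; nlinarith [Real.sin_sq_add_cos_sq s]
  have hsq : Real.sqrt (ph 1 s) = Real.cos s := by
    rw [hph, Real.sqrt_sq hc.le]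
  rw [ff', hsq]
  have h1 : Real.sin s ^ 2 = 1 - Real.cos s ^ 2 := by nlinarith [Real.sin_sq_add_cos_sq s]
  rw [h1]
  field_simp
  ring

lemma ff_one {s : ℝ} (hc : 0 ≤ Real.cos s) : ff 1 s = Real.cos s := by
  have hph : ph 1 s = Real.cos s ^ 2 := by
    rw [ph]; nlinarith [Real.sin_sq_add_cos_sq s]
  rw [ff, hph, Real.sqrt_sq hc]; simp


lemma hasDerivAt_P {s : ℝ} (hc : 0 < Real.cos s) :
    HasDerivAt (fun s => Real.sin s - Real.log ((1 + Real.sin s)/Real.cos s))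
      (Real.cos s - (Real.cos s)⁻¹) s := by
  have hs1 : 0 < 1 + Real.sin s := by nlinarith [Real.neg_one_le_sin s, Real.sin_sq_add_cos_sq s]
  have hu : HasDerivAt (fun s => (1 + Real.sin s)/Real.cos s)
      ((Real.cos s * Real.cos s - (1 + Real.sin s) * (-Real.sin s)) / Real.cos s ^ 2) s :=
    ((Real.hasDerivAt_sin s).const_add 1).div (Real.hasDerivAt_cos s) hc.ne'
  have hlog := hu.log (by positivity)
  have := (Real.hasDerivAt_sin s).sub hlog
  refine this.congr_deriv ?_
  have hpy := Real.sin_sq_add_cos_sq s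
  field_simp
  ring_nf
  nlinarith [hpy]

lemma A_value (a : ℝ) (ha0 : 0 < a) (ha1 : a < 1) (Th : ℝ) (hT0 : 0 < Th) (hT2 : Th < π/2)
    (hsin : Real.sin Th = Real.sqrt (1 - a^2)) (hcos : Real.cos Th = a) :
    ∫ s in (0:ℝ)..Th, (Real.cos s - (Real.cos s)⁻¹) =
      Real.sqrt (1 - a^2) - Real.log ((1 + Real.sqrt (1 - a^2))/a) := by
  have hcpos : ∀ s ∈ uIcc (0:ℝ) Th, 0 < Real.cos s := by
    intro s hs
    rw [uIcc_of_le hT0.le] at hs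
    exact Real.cos_pos_of_mem_Ioo ⟨by linarith [hs.1, Real.pi_pos], lt_of_le_of_lt hs.2 hT2⟩
  rw [integral_eq_sub_of_hasDerivAt (f := fun s => Real.sin s - Real.log ((1 + Real.sin s)/Real.cos s))
    (fun s hs => hasDerivAt_P (hcpos s hs))]
  · rw [hsin, hcos]; simp
  · apply ContinuousOn.intervalIntegrable
    apply ContinuousOn.sub Real.continuousOn_cos
    intro s hs
    exact ((continuousAt_inv₀ (hcpos s hs).ne').comp Real.continuous_cos.continuousAt).continuousWithinAt


lemma hasDerivAt_thf (a : ℝ) (ha0 : 0 < a) (ha1 : a < 1) :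
    HasDerivAt (thf a) (a / Real.sqrt (1 - a^2)) 1 := by
  have h1a : (0:ℝ) < 1 - a^2 := by nlinarith
  have hsa : 0 < Real.sqrt (1 - a^2) := Real.sqrt_pos.2 h1a
  have hsa1 : Real.sqrt (1 - a^2) < 1 := by
    have h : (1:ℝ) - a^2 < 1 := by nlinarith
    calc Real.sqrt (1-a^2) < Real.sqrt 1 := Real.sqrt_lt_sqrt h1a.le h
    _ = 1 := Real.sqrt_one
  have hv : HasDerivAt (fun t : ℝ => (t^2 - a^2)/(2*t - 1)) (2*a^2) 1 := by
    have hden : HasDerivAt (fun t : ℝ => 2*t - 1) 2 1 := by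
      simpa using ((hasDerivAt_id (1:ℝ)).const_mul 2).sub_const 1
    have hd := ((hasDerivAt_pow 2 (1:ℝ)).sub_const (a^2)).div hden (by norm_num)
    refine hd.congr_deriv ?_
    push_cast
    ring
  have hv1 : ((1:ℝ)^2 - a^2)/(2*1 - 1) = 1 - a^2 := by norm_num
  have hsq : HasDerivAt (fun t : ℝ => Real.sqrt ((t^2 - a^2)/(2*t - 1)))
      (2*a^2 / (2 * Real.sqrt (1 - a^2))) 1 := by
    have := hv.sqrt (by rw [hv1]; exact h1a.ne')
    rwa [hv1] at this
  have harc : HasDerivAt Real.arcsin (1 / Real.sqrt (1 - Real.sqrt (1 - a^2) ^ 2))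
      (Real.sqrt (((1:ℝ)^2 - a^2)/(2*1 - 1))) := by
    rw [hv1]
    exact Real.hasDerivAt_arcsin (by linarith) (by linarith)
  have hcomp := harc.comp 1 hsq
  refine hcomp.congr_deriv ?_
  rw [Real.sq_sqrt h1a.le, show 1 - (1 - a^2) = a^2 by ring, Real.sqrt_sq ha0.le]
  field_simp

/-- bound on ff' -/
lemma ff'_bound (ha0 : 0 < a) (ha1 : a < 1) {t s : ℝ} (ht : |t - 1| < 1/4)
    (hs0 : 0 ≤ s) (hs1 : s ≤ Real.arcsin (Real.sqrt (1-a^2))) :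
    ‖ff' t s‖ ≤ 3/(2*Real.sqrt (Real.cos ((Real.arcsin (Real.sqrt (1-a^2)) + π/2)/2) ^ 2 / 2))
      + (4 + 3/(4*Real.sqrt (Real.cos ((Real.arcsin (Real.sqrt (1-a^2)) + π/2)/2) ^ 2 / 2)))
        / (Real.cos ((Real.arcsin (Real.sqrt (1-a^2)) + π/2)/2) ^ 2 / 2) := by
  set m := Real.cos ((Real.arcsin (Real.sqrt (1-a^2)) + π/2)/2) ^ 2 / 2 with hm
  have hm0 : 0 < m := by have := cos_Th'_pos ha0 ha1; positivity
  have hs1' : s ≤ (Real.arcsin (Real.sqrt (1-a^2)) + π/2)/2 :=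
    le_trans hs1 (Th_lt_Th' ha0 ha1).le
  have hph : m ≤ ph t s := ph_ge ha0 ha1 ht hs0 hs1'
  have hph0 : 0 < ph t s := lt_of_lt_of_le hm0 hph
  set q := Real.sqrt (ph t s) with hq
  have hq0 : 0 < q := Real.sqrt_pos.2 hph0
  have hqm : Real.sqrt m ≤ q := Real.sqrt_le_sqrt hph
  have hsm0 : 0 < Real.sqrt m := Real.sqrt_pos.2 hm0
  have htl : |t| ≤ 3/2 := by rw [abs_lt] at ht; rw [abs_le]; constructor <;> linarith
  have ht' : 3/4 < t ∧ t < 5/4 := by rw [abs_lt] at ht; constructor <;> linarith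
  have hq2 : q ≤ 2 := by
    have h1 : ph t s ≤ t^2 := by
      rw [ph]; nlinarith [sq_nonneg (Real.sin s), ht'.1]
    calc q ≤ Real.sqrt (t^2) := Real.sqrt_le_sqrt h1
    _ = |t| := Real.sqrt_sq_eq_abs t
    _ ≤ 2 := by linarith
  have hsin : Real.sin s ^2 ≤ 1 := by nlinarith [Real.neg_one_le_sin s, Real.sin_le_one s]
  have hA : |2*t - 2*Real.sin s^2| ≤ 3 := by
    rw [abs_le]; constructor <;> nlinarith [sq_nonneg (Real.sin s), ht'.1, ht'.2, hsin]
  have h1 : |(2*t - 2*Real.sin s^2) / (2 * q)| ≤ 3/(2*Real.sqrt m) := by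
    rw [abs_div, abs_of_pos (by linarith : (0:ℝ) < 2*q)]
    gcongr
    all_goals linarith
  have hnum : |(1-2*t) * q - (t - t^2) * ((2*t - 2*Real.sin s^2) / (2 * q))|
      ≤ 4 + 3/(4*Real.sqrt m) := by
    have h2 : |(1-2*t) * q| ≤ 2 * 2 := by
      rw [abs_mul, abs_of_pos hq0]
      have : |1-2*t| ≤ 2 := by rw [abs_le]; constructor <;> (obtain ⟨h,h'⟩ := ht'; linarith)
      nlinarith
    have h3 : |(t - t^2) * ((2*t - 2*Real.sin s^2) / (2 * q))| ≤ (1/2) * (3/(2*Real.sqrt m)) := by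
      rw [abs_mul]
      have h4 : |t - t^2| ≤ 1/2 := by rw [abs_le]; constructor <;> nlinarith [ht'.1, ht'.2]
      have h5 := h1
      have : (0:ℝ) ≤ |(2*t - 2*Real.sin s^2) / (2 * q)| := abs_nonneg _
      nlinarith
    calc _ ≤ |(1-2*t) * q| + |(t - t^2) * ((2*t - 2*Real.sin s^2) / (2 * q))| := abs_sub _ _
    _ ≤ 2*2 + (1/2) * (3/(2*Real.sqrt m)) := add_le_add h2 h3
    _ = 4 + 3/(4*Real.sqrt m) := by ring
  have h6 : |((1-2*t) * q - (t - t^2) * ((2*t - 2*Real.sin s^2) / (2 * q))) / q^2|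
      ≤ (4 + 3/(4*Real.sqrt m)) / m := by
    rw [abs_div, abs_of_pos (by positivity : (0:ℝ) < q^2)]
    have hq2m : m ≤ q^2 := by rw [hq, Real.sq_sqrt hph0.le]; exact hph
    gcongr
  calc ‖ff' t s‖ ≤ |(2*t - 2*Real.sin s^2) / (2 * q)|
        + |((1-2*t) * q - (t - t^2) * ((2*t - 2*Real.sin s^2) / (2 * q))) / q^2| := by
        rw [ff']; exact abs_add_le _ _
  _ ≤ 3/(2*Real.sqrt m) + (4 + 3/(4*Real.sqrt m)) / m := add_le_add h1 h6


lemma ff_contOn (ha0 : 0 < a) (ha1 : a < 1) {t : ℝ} (ht : |t - 1| < 1/4) :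
    ContinuousOn (ff t) (Icc 0 ((Real.arcsin (Real.sqrt (1-a^2)) + π/2)/2)) := by
  have hph : ∀ s ∈ Icc (0:ℝ) ((Real.arcsin (Real.sqrt (1-a^2)) + π/2)/2), 0 < ph t s := by
    intro s hs
    exact lt_of_lt_of_le (by have := cos_Th'_pos ha0 ha1; positivity)
      (ph_ge ha0 ha1 ht hs.1 hs.2)
  have hc : Continuous (fun s => ph t s) := by
    unfold ph; continuity
  apply ContinuousOn.add
  · exact (Real.continuous_sqrt.comp hc).continuousOn
  · apply ContinuousOn.div continuousOn_const (Real.continuous_sqrt.comp hc).continuousOn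
    intro s hs
    exact (Real.sqrt_pos.2 (hph s hs)).ne'

lemma ff_meas (t : ℝ) : AEStronglyMeasurable (ff t)
    (volume.restrict (Ι (0:ℝ) (Real.arcsin (Real.sqrt (1-a^2))))) := by
  apply Measurable.aestronglyMeasurable
  unfold ff ph
  fun_prop

lemma ff'_meas (t : ℝ) : AEStronglyMeasurable (ff' t)
    (volume.restrict (Ι (0:ℝ) (Real.arcsin (Real.sqrt (1-a^2))))) := by
  apply Measurable.aestronglyMeasurable
  unfold ff' ph
  fun_prop

lemma H1_deriv (ha0 : 0 < a) (ha1 : a < 1) :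
    HasDerivAt (fun t => ∫ s in (0:ℝ)..(Real.arcsin (Real.sqrt (1-a^2))), ff t s)
      (∫ s in (0:ℝ)..(Real.arcsin (Real.sqrt (1-a^2))), ff' 1 s) 1 := by
  set Th := Real.arcsin (Real.sqrt (1-a^2)) with hTh
  set m := Real.cos ((Th + π/2)/2) ^ 2 / 2 with hm
  set K := 3/(2*Real.sqrt m) + (4 + 3/(4*Real.sqrt m)) / m with hK
  have hT0 : 0 < Th := Th_pos ha0 ha1
  have key := intervalIntegral.hasDerivAt_integral_of_dominated_loc_of_deriv_le
    (F := ff) (F' := ff') (x₀ := (1:ℝ)) (a := (0:ℝ)) (b := Th) (μ := volume)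
    (bound := fun _ => K) (s := Metric.ball 1 (1/4)) (Metric.ball_mem_nhds _ (by norm_num))
    (Filter.Eventually.of_forall ff_meas)
    ?_ (ff'_meas 1) ?_ intervalIntegrable_const ?_
  · exact key.2
  · -- integrability of ff 1
    apply ContinuousOn.intervalIntegrable
    apply (ff_contOn ha0 ha1 (by norm_num)).mono
    rw [uIcc_of_le hT0.le]
    apply Icc_subset_Icc le_rfl (Th_lt_Th' ha0 ha1).le
  · -- bound
    apply Filter.Eventually.of_forall
    intro s hs t htb
    rw [Metric.mem_ball, Real.dist_eq] at htb
    rw [uIoc_of_le hT0.le] at hs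
    exact ff'_bound ha0 ha1 htb hs.1.le hs.2
  · -- differentiability
    apply Filter.Eventually.of_forall
    intro s hs t htb
    rw [Metric.mem_ball, Real.dist_eq] at htb
    rw [uIoc_of_le hT0.le] at hs
    apply hasDerivAt_ff
    exact lt_of_lt_of_le (by have := cos_Th'_pos ha0 ha1; positivity)
      (ph_ge ha0 ha1 htb hs.1.le (le_trans hs.2 (Th_lt_Th' ha0 ha1).le))


lemma ph_one (ha0 : 0 < a) (ha1 : a < 1) :
    ph 1 (Real.arcsin (Real.sqrt (1-a^2))) = a^2 := by
  rw [ph, sin_Th ha0 ha1, Real.sq_sqrt (by nlinarith)]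
  ring

lemma thf_one : thf a 1 = Real.arcsin (Real.sqrt (1-a^2)) := by
  rw [thf]
  norm_num

lemma ff_jointCont (ha0 : 0 < a) (ha1 : a < 1) :
    ContinuousAt (fun p : ℝ × ℝ => ff p.1 p.2) (1, Real.arcsin (Real.sqrt (1-a^2))) := by
  have hg : Continuous (fun p : ℝ × ℝ => ph p.1 p.2) := by
    unfold ph; fun_prop
  have hsq : Continuous (fun p : ℝ × ℝ => Real.sqrt (ph p.1 p.2)) :=
    Real.continuous_sqrt.comp hg
  have hne : Real.sqrt (ph 1 (Real.arcsin (Real.sqrt (1-a^2)))) ≠ 0 := by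
    rw [ph_one ha0 ha1]
    positivity
  exact (hsq.continuousAt).add ((continuousAt_fst.sub (continuousAt_fst.pow 2)).div
    hsq.continuousAt hne)

lemma R_fderiv (ha0 : 0 < a) (ha1 : a < 1) :
    HasFDerivAt (fun p : ℝ × ℝ =>
        ∫ s in (Real.arcsin (Real.sqrt (1-a^2)))..p.2, ff p.1 s)
      (a • (ContinuousLinearMap.snd ℝ ℝ ℝ)) (1, Real.arcsin (Real.sqrt (1-a^2))) := by
  set Th := Real.arcsin (Real.sqrt (1-a^2)) with hThdef
  have hT0 : 0 < Th := Th_pos ha0 ha1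
  have hTT' : Th < (Th + π/2)/2 := Th_lt_Th' ha0 ha1
  have hffa : ff 1 Th = a := by
    rw [ff_one (by rw [hThdef, cos_Th ha0 ha1]; exact ha0.le)]
    exact cos_Th ha0 ha1
  rw [hasFDerivAt_iff_isLittleO_nhds_zero]
  rw [Asymptotics.isLittleO_iff]
  intro c hc
  -- continuity at (1, Th)
  have hjc := ff_jointCont ha0 ha1
  rw [Metric.continuousAt_iff] at hjc
  obtain ⟨d1, hd1, hball⟩ := hjc c hc
  set d := min (min d1 (1/4)) (min Th ((Th + π/2)/2 - Th)) with hd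
  have hd0 : 0 < d := by
    apply lt_min (lt_min hd1 (by norm_num)) (lt_min hT0 (by linarith))
  rw [Metric.eventually_nhds_iff]
  refine ⟨d, hd0, ?_⟩
  intro p hp
  rw [dist_zero_right] at hp
  obtain ⟨t, y⟩ := p
  have hpt : ‖(t, y)‖ = max ‖t‖ ‖y‖ := rfl
  have htn : |t| < d := by
    calc |t| = ‖t‖ := (Real.norm_eq_abs t).symm
    _ ≤ ‖(t, y)‖ := by rw [hpt]; exact le_max_left _ _
    _ < d := hp
  have hyn : |y| < d := by
    calc |y| = ‖y‖ := (Real.norm_eq_abs y).symm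
    _ ≤ ‖(t, y)‖ := by rw [hpt]; exact le_max_right _ _
    _ < d := hp
  simp only [Prod.fst_add, Prod.snd_add]
  -- the point is (1,Th) + (t,y) = (1+t, Th+y)
  have hint : IntervalIntegrable (ff (1+t)) volume Th (Th+y) := by
    apply ContinuousOn.intervalIntegrable
    apply (ff_contOn ha0 ha1 (by rw [abs_lt]
                                 rw [abs_lt] at htn
                                 have : d ≤ 1/4 := le_trans (min_le_left _ _) (min_le_right _ _)
                                 constructor <;> [linarith; linarith])).mono
    intro s hs
    rw [mem_uIcc] at hs
    have hdT : d ≤ Th := le_trans (min_le_right _ _) (min_le_left _ _)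
    have hdT' : d ≤ (Th + π/2)/2 - Th := le_trans (min_le_right _ _) (min_le_right _ _)
    rw [abs_lt] at hyn
    constructor
    · rcases hs with h | h <;> [linarith [h.1]; linarith [h.1] ]
    · rcases hs with h | h <;> [linarith [h.2]; linarith [h.2] ]
  have hsub : (∫ s in Th..(Th+y), ff (1+t) s) - (∫ s in Th..Th, ff 1 s)
      - (a • (ContinuousLinearMap.snd ℝ ℝ ℝ)) (t, y)
      = ∫ s in Th..(Th+y), (ff (1+t) s - a) := by
    rw [intervalIntegral.integral_sub hint (_root_.intervalIntegrable_const (c := a))]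
    simp [hffa]
    ring
  rw [hsub]
  have hbd : ∀ s ∈ Ι Th (Th+y), ‖ff (1+t) s - a‖ ≤ c := by
    intro s hs
    have hsy : |s - Th| ≤ |y| := by
      rw [Set.mem_uIoc] at hs
      rcases hs with h | h <;> (rw [abs_le]; constructor) <;>
        [linarith [h.1, h.2, abs_nonneg y, le_abs_self y]; linarith [h.1, h.2, le_abs_self y];
         linarith [h.1, h.2, neg_abs_le y]; linarith [h.1, h.2, abs_nonneg y, neg_abs_le y] ]
    have hdist : dist ((1+t : ℝ), s) ((1:ℝ), Th) < d1 := by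
      rw [Prod.dist_eq, Real.dist_eq, Real.dist_eq]
      have hdd1 : d ≤ d1 := le_trans (min_le_left _ _) (min_le_left _ _)
      apply max_lt
      · rw [show 1 + t - 1 = t by ring]; exact lt_of_lt_of_le htn hdd1
      · calc |s - Th| ≤ |y| := hsy
        _ < d := hyn
        _ ≤ d1 := hdd1
    have h9 := hball hdist
    rw [Real.dist_eq] at h9
    simp only at h9
    rw [Real.norm_eq_abs]
    rw [show (ff (1+t) s - a) = (ff (1+t) s - ff 1 Th) by rw [hffa] ]
    exact le_of_lt (by exact_mod_cast h9)
  calc ‖∫ s in Th..(Th+y), (ff (1+t) s - a)‖ ≤ c * |Th + y - Th| :=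
        intervalIntegral.norm_integral_le_of_norm_le_const hbd
  _ = c * |y| := by ring_nf
  _ ≤ c * ‖(t, y)‖ := by
      apply mul_le_mul_of_nonneg_left _ hc.le
      rw [hpt]
      calc |y| = ‖y‖ := (Real.norm_eq_abs y).symm
      _ ≤ _ := le_max_right _ _

lemma subst_eq (ha0 : 0 < a) (ha1 : a < 1) {t : ℝ}
    (ht : |t - 1| < min (a^2/4) ((1-a)/2)) :
    (∫ x in a..t, 1 / Real.sqrt ((x / (x ^ 2 + t - t ^ 2)) ^ 2 - 1))
      = ∫ s in (0:ℝ)..(thf a t), ff t s := by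
  have ht1 : |t - 1| < a^2/4 := lt_of_lt_of_le ht (min_le_left _ _)
  have ht2 : |t - 1| < (1-a)/2 := lt_of_lt_of_le ht (min_le_right _ _)
  rw [abs_lt] at ht1 ht2
  have hta : a < t := by nlinarith
  have ht0 : (1+a)/2 < t := by linarith
  have htp : 0 < t := by linarith
  have h2t : 0 < 2*t - 1 := by linarith
  have hcpos : 0 < a^2 + (t - t^2) := by nlinarith
  have hv : (t^2 - a^2)/(2*t - 1) = (t^2-a^2)/(2*t-1) := rfl
  set v := (t^2 - a^2)/(2*t - 1) with hvdef
  have hv0 : 0 < v := div_pos (by nlinarith) h2t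
  have hv1 : v < 1 := by
    rw [div_lt_one h2t]
    nlinarith
  set Θ := thf a t with hΘdef
  have hsinΘ : Real.sin Θ = Real.sqrt v := by
    rw [hΘdef, thf]
    exact Real.sin_arcsin ((by norm_num : (-1:ℝ) ≤ 0).trans (Real.sqrt_nonneg _))
      (Real.sqrt_le_one.mpr hv1.le)
  have hsinΘ2 : Real.sin Θ ^ 2 = v := by rw [hsinΘ, Real.sq_sqrt hv0.le]
  have hΘ0 : 0 < Θ := Real.arcsin_pos.2 (Real.sqrt_pos.2 hv0)
  have hΘ2 : Θ < π/2 := Real.arcsin_lt_pi_div_two.2 (by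
    calc Real.sqrt v < Real.sqrt 1 := Real.sqrt_lt_sqrt hv0.le hv1
    _ = 1 := Real.sqrt_one)
  -- key positivity on the open interval
  have hsin_lt : ∀ s ∈ Ioo (0:ℝ) Θ, Real.sin s ^ 2 < v := by
    intro s hs
    have h1 : Real.sin s < Real.sin Θ := by
      apply Real.strictMonoOn_sin ⟨by linarith [hs.1, Real.pi_pos], by linarith [hs.2]⟩
        ⟨by linarith [hΘ0, Real.pi_pos], hΘ2.le⟩ hs.2
    have h2 : 0 ≤ Real.sin s := Real.sin_nonneg_of_nonneg_of_le_pi hs.1.le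
      (by linarith [hs.2, Real.pi_pos, Real.pi_gt_three])
    nlinarith [hsinΘ2]
  have hsin_pos : ∀ s ∈ Ioo (0:ℝ) Θ, 0 < Real.sin s := fun s hs =>
    Real.sin_pos_of_pos_of_lt_pi hs.1 (by linarith [hs.2, Real.pi_gt_three])
  have hcos_pos : ∀ s ∈ Ioo (0:ℝ) Θ, 0 < Real.cos s := fun s hs =>
    Real.cos_pos_of_mem_Ioo ⟨by linarith [hs.1, Real.pi_pos], by linarith [hs.2]⟩
  have hph_gt : ∀ s ∈ Ioo (0:ℝ) Θ, a^2 < ph t s := by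
    intro s hs
    have := hsin_lt s hs
    rw [ph]
    have hva : (2*t-1) * v = t^2 - a^2 := by
      rw [hvdef]; field_simp
    nlinarith
  have hph_lt : ∀ s ∈ Ioo (0:ℝ) Θ, ph t s < t^2 := by
    intro s hs
    have h1 := hsin_pos s hs
    rw [ph]
    have h2 : 0 < (2*t-1) * Real.sin s^2 := by positivity
    linarith
  have hphΘ : ph t Θ = a^2 := by
    rw [ph, hsinΘ2, hvdef]
    rw [mul_div_assoc', mul_div_cancel_left₀ _ h2t.ne']; ring
  have hph0' : ph t 0 = t^2 := by simp [ph]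
  set ψ := fun s => Real.sqrt (ph t s) with hψdef
  have hψcont : Continuous ψ := by
    apply Real.continuous_sqrt.comp
    unfold ph; fun_prop
  -- derivative
  set ψ' := fun s => -((2*t-1) * Real.sin s * Real.cos s) / Real.sqrt (ph t s) with hψ'def
  have hderiv : ∀ s ∈ Ioo (0:ℝ) Θ, HasDerivWithinAt ψ (ψ' s) (Ioo 0 Θ) s := by
    intro s hs
    have hphp : 0 < ph t s := lt_trans (by positivity) (hph_gt s hs)
    have hphd : HasDerivAt (fun s => ph t s) (-(2*t-1) * (2 * Real.sin s * Real.cos s)) s := by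
      have h1 : HasDerivAt (fun s => Real.sin s ^ 2) (2 * Real.sin s * Real.cos s) s := by
        exact ((Real.hasDerivAt_sin s).pow 2).congr_deriv (by simp)
      have h3 := (h1.const_mul (2*t-1)).const_sub (t^2)
      refine h3.congr_deriv ?_
      ring
    have h2 := (hphd.sqrt hphp.ne').hasDerivWithinAt (s := Ioo (0:ℝ) Θ)
    refine h2.congr_deriv ?_
    rw [hψ'def]
    have hs0 : Real.sqrt (ph t s) ≠ 0 := (Real.sqrt_pos.2 hphp).ne'
    field_simp
  -- strict antitonicity / injectivity
  have hanti : StrictAntiOn ψ (Ioo (0:ℝ) Θ) := by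
    intro x hx y hy hxy
    have h1 : Real.sin x < Real.sin y := by
      apply Real.strictMonoOn_sin ⟨by linarith [hx.1, Real.pi_pos], by linarith [hx.2]⟩
        ⟨by linarith [hy.1, Real.pi_pos], by linarith [hy.2]⟩ hxy
    have h2 : 0 < Real.sin x := hsin_pos x hx
    have h3 : ph t y < ph t x := by
      rw [ph, ph]
      have hy2 : Real.sin x^2 < Real.sin y^2 := by nlinarith
      have := mul_lt_mul_of_pos_left hy2 h2t
      linarith
    have h4 : 0 < ph t y := lt_trans (by positivity) (hph_gt y hy)
    exact Real.sqrt_lt_sqrt h4.le h3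
  have hinj : InjOn ψ (Ioo (0:ℝ) Θ) := hanti.injOn
  -- image
  have himg : ψ '' Ioo (0:ℝ) Θ = Ioo a t := by
    apply Subset.antisymm
    · rintro x ⟨s, hs, rfl⟩
      constructor
      · have := hph_gt s hs
        calc a = Real.sqrt (a^2) := (Real.sqrt_sq ha0.le).symm
        _ < ψ s := Real.sqrt_lt_sqrt (by positivity) this
      · have := hph_lt s hs
        calc ψ s < Real.sqrt (t^2) := Real.sqrt_lt_sqrt
              (le_trans (by positivity) (hph_gt s hs).le) this
        _ = t := Real.sqrt_sq htp.le
    · have h5 := intermediate_value_Ioo' (le_of_lt hΘ0) (hψcont.continuousOn (s := Icc 0 Θ))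
      intro x hx
      apply h5
      rw [hψdef]
      simp only
      rw [hphΘ, hph0', Real.sqrt_sq ha0.le, Real.sqrt_sq htp.le]
      exact hx
  -- change of variables
  have hcov := MeasureTheory.integral_image_eq_integral_abs_deriv_smul
    (measurableSet_Ioo) hderiv hinj
    (fun x => 1 / Real.sqrt ((x / (x ^ 2 + t - t ^ 2)) ^ 2 - 1))
  rw [himg] at hcov
  -- pointwise identity on Ioo 0 Θ
  have hpt : ∀ s ∈ Ioo (0:ℝ) Θ,
      |ψ' s| • (1 / Real.sqrt ((ψ s / ((ψ s) ^ 2 + t - t ^ 2)) ^ 2 - 1)) = ff t s := by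
    intro s hs
    have hphp : 0 < ph t s := lt_trans (by positivity) (hph_gt s hs)
    have hx0 : 0 < ψ s := Real.sqrt_pos.2 hphp
    have hx2 : (ψ s)^2 = ph t s := Real.sq_sqrt hphp.le
    set K := (2*t-1) * Real.sin s * Real.cos s with hKdef
    have hK0 : 0 < K := by
      have := hsin_pos s hs; have := hcos_pos s hs
      positivity
    set D := ph t s + t - t^2 with hDdef
    have hD0 : 0 < D := by
      have := hph_gt s hs
      rw [hDdef]
      nlinarith
    have hnum : ph t s - D^2 = K^2 := by
      rw [hDdef]
      simp only [hKdef, ph]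
      linear_combination (-(2*t-1)^2 * Real.sin s^2) * Real.sin_sq_add_cos_sq s
    have hkey : (ψ s / ((ψ s) ^ 2 + t - t ^ 2)) ^ 2 - 1 = (K/D)^2 := by
      rw [hx2, show ph t s + t - t^2 = D from hDdef.symm, div_pow, hx2,
        div_sub_one (pow_ne_zero 2 hD0.ne'), hnum, ← div_pow]
    rw [hkey, Real.sqrt_sq (by positivity)]
    have hψ's : |ψ' s| = K / ψ s := by
      rw [hψ'def]
      simp only
      rw [abs_div, abs_neg, abs_of_pos hK0, abs_of_pos (Real.sqrt_pos.2 hphp)]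
    rw [hψ's, smul_eq_mul, ff]
    rw [one_div, inv_div]
    rw [hDdef]
    field_simp
    have : ψ s = Real.sqrt (ph t s) := rfl; rw [this, Real.sq_sqrt hphp.le]; ring
  -- put it together
  rw [intervalIntegral.integral_of_le hta.le, intervalIntegral.integral_of_le hΘ0.le,
    MeasureTheory.integral_Ioc_eq_integral_Ioo, MeasureTheory.integral_Ioc_eq_integral_Ioo, hcov]
  exact MeasureTheory.setIntegral_congr_fun measurableSet_Ioo hpt

end XA

/-- For `0 < a < 1`, the function `t ↦ x_a(t) = ∫_a^t ((x/(x²+t−t²))²−1)^{−1/2} dx`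
is differentiable at `t = 1` with derivative `g(a) = −log((1+√(1−a²))/a) + 1/√(1−a²)`. -/
theorem xa_hasDerivAt_one (a : ℝ) (ha0 : 0 < a) (ha1 : a < 1) :
    HasDerivAt
      (fun t => ∫ x in a..t, 1 / Real.sqrt ((x / (x ^ 2 + t - t ^ 2)) ^ 2 - 1))
      (-Real.log ((1 + Real.sqrt (1 - a ^ 2)) / a) + 1 / Real.sqrt (1 - a ^ 2)) 1 := by
  have h1a : (0:ℝ) < 1 - a^2 := by nlinarith
  have hsa : 0 < Real.sqrt (1-a^2) := Real.sqrt_pos.2 h1a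
  set Ta := Real.arcsin (Real.sqrt (1-a^2)) with hTa
  have hT0 : 0 < Ta := XA.Th_pos ha0 ha1
  have hTT' : Ta < (Ta + π/2)/2 := XA.Th_lt_Th' ha0 ha1
  have hH1 := XA.H1_deriv ha0 ha1
  have hRf := XA.R_fderiv ha0 ha1
  have hth := XA.hasDerivAt_thf a ha0 ha1
  have hgam : HasDerivAt (fun t => (t, XA.thf a t)) (1, a / Real.sqrt (1-a^2)) 1 :=
    (hasDerivAt_id 1).prodMk hth
  have hRf' : HasFDerivAt (fun p : ℝ × ℝ => ∫ s in Ta..p.2, XA.ff p.1 s)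
      (a • (ContinuousLinearMap.snd ℝ ℝ ℝ)) ((fun t => (t, XA.thf a t)) 1) := by
    rw [show ((fun t => (t, XA.thf a t)) 1) = ((1:ℝ), Ta) by
      simp only; rw [XA.thf_one] ]
    exact hRf
  have hcomp := hRf'.comp_hasDerivAt 1 hgam
  have hsum := hH1.add hcomp
  have hev : (fun t => ∫ x in a..t, 1 / Real.sqrt ((x / (x ^ 2 + t - t ^ 2)) ^ 2 - 1))
      =ᶠ[nhds 1] (fun t => (∫ s in (0:ℝ)..Ta, XA.ff t s)
        + ((fun p : ℝ × ℝ => ∫ s in Ta..p.2, XA.ff p.1 s) ∘ (fun t => (t, XA.thf a t))) t) := by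
    have hev1 : ∀ᶠ t in nhds (1:ℝ), |t - 1| < min (a^2/4) ((1-a)/2) := by
      rw [Metric.eventually_nhds_iff]
      exact ⟨min (a^2/4) ((1-a)/2), lt_min (by positivity) (by linarith),
        fun y hy => by rwa [Real.dist_eq] at hy⟩
    have hev2 : ∀ᶠ t in nhds (1:ℝ), XA.thf a t ∈ Ioo 0 ((Ta + π/2)/2) := by
      apply hth.continuousAt.eventually_mem
      rw [XA.thf_one]
      exact isOpen_Ioo.mem_nhds ⟨hT0, hTT'⟩
    filter_upwards [hev1, hev2] with t h1 h2
    have heq1 := XA.subst_eq ha0 ha1 (t := t) h1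
    rw [heq1]
    have h14 : |t - 1| < 1/4 :=
      lt_of_lt_of_le h1 (le_trans (min_le_left _ _) (by nlinarith : a^2/4 ≤ 1/4))
    have hco := XA.ff_contOn ha0 ha1 h14
    have hi1 : IntervalIntegrable (XA.ff t) volume 0 Ta :=
      (hco.mono (by rw [uIcc_of_le hT0.le]; exact Icc_subset_Icc le_rfl hTT'.le)).intervalIntegrable
    have hi2 : IntervalIntegrable (XA.ff t) volume Ta (XA.thf a t) := by
      apply (hco.mono _).intervalIntegrable
      intro s hs
      rw [mem_uIcc] at hs
      constructor
      · rcases hs with h|h <;> [linarith [h.1]; linarith [h.1, h2.1] ]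
      · rcases hs with h|h <;> [linarith [h.2, h2.2]; linarith [h.2] ]
    rw [← intervalIntegral.integral_add_adjacent_intervals hi1 hi2]
    simp only [Function.comp]
  have hfinal := hsum.congr_of_eventuallyEq hev
  have hA : (∫ s in (0:ℝ)..Ta, XA.ff' 1 s)
      = Real.sqrt (1-a^2) - Real.log ((1 + Real.sqrt (1-a^2))/a) := by
    rw [intervalIntegral.integral_congr (g := fun s => Real.cos s - (Real.cos s)⁻¹) ?_]
    · exact XA.A_value a ha0 ha1 Ta hT0 (XA.Th_lt ha0 ha1) (XA.sin_Th ha0 ha1) (XA.cos_Th ha0 ha1)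
    · intro s hs
      rw [uIcc_of_le hT0.le] at hs
      exact XA.ff'_one (Real.cos_pos_of_mem_Ioo
        ⟨by linarith [hs.1, Real.pi_pos], lt_of_le_of_lt hs.2 (XA.Th_lt ha0 ha1)⟩)
    
  refine hfinal.congr_deriv ?_
  rw [hA]
  have hval : (a • (ContinuousLinearMap.snd ℝ ℝ ℝ)) ((1:ℝ), a / Real.sqrt (1-a^2))
      = a * (a / Real.sqrt (1-a^2)) := by simp
  rw [hval]
  have hsq : Real.sqrt (1-a^2) * Real.sqrt (1-a^2) = 1-a^2 := Real.mul_self_sqrt h1a.le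
  have key : Real.sqrt (1-a^2) + a*(a/Real.sqrt (1-a^2)) = 1/Real.sqrt (1-a^2) := by
    field_simp
    nlinarith [Real.sq_sqrt h1a.le]
  linarith [key]
end
end

section
/- The function g(a) = −log((1 + √(1 − a²))/a) + 1/√(1 − a²) is strictly increasing on the interval (0, 1), and it has exactly one zero a₀ in (0, 1); moreover 0.55 < a₀ < 0.56. -/
/-- `g(a) = −log((1+√(1−a²))/a) + 1/√(1−a²)`. -/
noncomputable def gFun (a : ℝ) : ℝ :=
  -Real.log ((1 + Real.sqrt (1 - a ^ 2)) / a) + 1 / Real.sqrt (1 - a ^ 2)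

lemma gFun_eq {a : ℝ} (ha : a ∈ Set.Ioo (0:ℝ) 1) :
    gFun a = Real.log a - Real.log (1 + Real.sqrt (1 - a ^ 2)) + 1 / Real.sqrt (1 - a ^ 2) := by
  obtain ⟨h0, h1⟩ := ha
  have hs : 0 ≤ Real.sqrt (1 - a ^ 2) := Real.sqrt_nonneg _
  rw [gFun, Real.log_div (by linarith) (ne_of_gt h0)]
  ring

lemma gFun_mono : StrictMonoOn gFun (Set.Ioo 0 1) := by
  intro a ha b hb hab
  have hsa : 0 < Real.sqrt (1 - a ^ 2) := Real.sqrt_pos.2 (by nlinarith [ha.1, ha.2])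
  have hsb : 0 < Real.sqrt (1 - b ^ 2) := Real.sqrt_pos.2 (by nlinarith [hb.1, hb.2])
  have hle : Real.sqrt (1 - b ^ 2) ≤ Real.sqrt (1 - a ^ 2) :=
    Real.sqrt_le_sqrt (by nlinarith [ha.1])
  rw [gFun_eq ha, gFun_eq hb]
  have hlog : Real.log a < Real.log b := Real.log_lt_log ha.1 hab
  have hlog2 : Real.log (1 + Real.sqrt (1 - b ^ 2)) ≤ Real.log (1 + Real.sqrt (1 - a ^ 2)) :=
    Real.log_le_log (by linarith) (by linarith)
  have hinv : 1 / Real.sqrt (1 - a ^ 2) ≤ 1 / Real.sqrt (1 - b ^ 2) :=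
    one_div_le_one_div_of_le hsb hle
  linarith

lemma exp_six_fifths_lt : Real.exp (6/5) < 1.8351 / 0.55 := by
  have h1 : Real.exp (6/5) ^ 5 = Real.exp 6 := by
    rw [← Real.exp_nat_mul]; norm_num
  have h2 : Real.exp 6 = Real.exp 1 ^ 6 := by
    rw [← Real.exp_nat_mul]; norm_num
  have h3 : Real.exp 1 ^ 6 < 2.7182818286 ^ 6 :=
    pow_lt_pow_left₀ Real.exp_one_lt_d9 (le_of_lt (Real.exp_pos 1)) (by norm_num)
  have h4 : (2.7182818286 : ℝ) ^ 6 < (1.8351 / 0.55) ^ 5 := by norm_num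
  have h5 : Real.exp (6/5) ^ 5 < (1.8351 / 0.55) ^ 5 := by
    rw [h1, h2]; linarith
  exact lt_of_pow_lt_pow_left₀ 5 (by norm_num) h5

lemma lt_exp_six_fifths : (1.8285 / 0.56 : ℝ) < Real.exp (6/5) := by
  have h1 : Real.exp (6/5) ^ 5 = Real.exp 6 := by
    rw [← Real.exp_nat_mul]; norm_num
  have h2 : Real.exp 6 = Real.exp 1 ^ 6 := by
    rw [← Real.exp_nat_mul]; norm_num
  have h3 : (2.7182818283 : ℝ) ^ 6 < Real.exp 1 ^ 6 :=
    pow_lt_pow_left₀ Real.exp_one_gt_d9 (by norm_num) (by norm_num)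
  have h4 : ((1.8285 / 0.56 : ℝ)) ^ 5 < (2.7182818283 : ℝ) ^ 6 := by norm_num
  have h5 : ((1.8285 / 0.56 : ℝ)) ^ 5 < Real.exp (6/5) ^ 5 := by
    rw [h1, h2]; linarith
  exact lt_of_pow_lt_pow_left₀ 5 (le_of_lt (Real.exp_pos _)) h5

lemma gA : gFun 0.55 < 0 := by
  have h : (1 : ℝ) - (0.55 : ℝ) ^ 2 = 0.6975 := by norm_num
  have hs2 : Real.sqrt 0.6975 ^ 2 = 0.6975 := Real.sq_sqrt (by norm_num)
  set s := Real.sqrt (0.6975 : ℝ) with hs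
  have hsnn : 0 ≤ s := Real.sqrt_nonneg _
  have hlb : (0.8351 : ℝ) ≤ s := by nlinarith
  have hspos : 0 < s := by linarith
  have hexp : Real.exp (1/s) ≤ Real.exp (6/5) := by
    apply Real.exp_le_exp.2
    rw [div_le_div_iff₀ hspos (by norm_num)]
    linarith
  have key : Real.exp (6/5) < (1 + s) / 0.55 := by
    refine lt_of_lt_of_le exp_six_fifths_lt ?_
    apply div_le_div_of_nonneg_right ?_ (by norm_num)
    · linarith
  have hlt : 1/s < Real.log ((1 + s) / 0.55) := by
    rw [Real.lt_log_iff_exp_lt (by positivity)]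
    exact lt_of_le_of_lt hexp key
  show gFun 0.55 < 0
  simp only [gFun, h]
  rw [← hs]
  linarith

lemma gB : 0 < gFun 0.56 := by
  have h : (1 : ℝ) - (0.56 : ℝ) ^ 2 = 0.6864 := by norm_num
  have hs2 : Real.sqrt 0.6864 ^ 2 = 0.6864 := Real.sq_sqrt (by norm_num)
  set s := Real.sqrt (0.6864 : ℝ) with hs
  have hsnn : 0 ≤ s := Real.sqrt_nonneg _
  have hub : s ≤ (0.8285 : ℝ) := by nlinarith
  have hspos : 0 < s := by nlinarith
  have hexp : Real.exp (6/5) ≤ Real.exp (1/s) := by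
    apply Real.exp_le_exp.2
    rw [div_le_div_iff₀ (by norm_num) hspos]
    linarith
  have key : (1 + s) / 0.56 < Real.exp (6/5) := by
    refine lt_of_le_of_lt ?_ lt_exp_six_fifths
    apply div_le_div_of_nonneg_right ?_ (by norm_num)
    · linarith
  have hlt : Real.log ((1 + s) / 0.56) < 1/s := by
    rw [Real.log_lt_iff_lt_exp (by positivity)]
    exact lt_of_lt_of_le key hexp
  show 0 < gFun 0.56
  simp only [gFun, h]
  rw [← hs]
  linarith

lemma gFun_contOn : ContinuousOn gFun (Set.Icc 0.55 0.56) := by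
  have hsq : Continuous fun x : ℝ => Real.sqrt (1 - x ^ 2) := by
    exact Real.continuous_sqrt.comp (by continuity)
  apply ContinuousOn.add
  · apply ContinuousOn.neg
    apply ContinuousOn.log
    · exact ContinuousOn.div ((continuous_const.add hsq).continuousOn)
        continuousOn_id (fun x hx => by
          have : (0.55 : ℝ) ≤ x := hx.1
          exact ne_of_gt (by linarith))
    · intro x hx
      have h1 : (0.55 : ℝ) ≤ x := hx.1
      have h2 : 0 ≤ Real.sqrt (1 - x ^ 2) := Real.sqrt_nonneg _
      apply div_ne_zero (by linarith) (by linarith)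
  · apply ContinuousOn.div continuousOn_const hsq.continuousOn
    intro x hx
    have h1 : (0.55 : ℝ) ≤ x := hx.1
    have h2 : x ≤ (0.56 : ℝ) := hx.2
    have : 0 < 1 - x ^ 2 := by nlinarith
    exact ne_of_gt (Real.sqrt_pos.2 this)

/-- `g` is strictly increasing on `(0,1)`, has exactly one zero `a₀` there,
and `0.55 < a₀ < 0.56`. -/
theorem gFun_strictMono_and_unique_zero :
    StrictMonoOn gFun (Set.Ioo 0 1) ∧
    (∃! a₀ : ℝ, a₀ ∈ Set.Ioo (0:ℝ) 1 ∧ gFun a₀ = 0) ∧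
    (∀ a₀ ∈ Set.Ioo (0:ℝ) 1, gFun a₀ = 0 → 0.55 < a₀ ∧ a₀ < 0.56) := by
  have h55 : (0.55 : ℝ) ∈ Set.Ioo (0:ℝ) 1 := by norm_num
  have h56 : (0.56 : ℝ) ∈ Set.Ioo (0:ℝ) 1 := by norm_num
  have bounds : ∀ a₀ ∈ Set.Ioo (0:ℝ) 1, gFun a₀ = 0 → 0.55 < a₀ ∧ a₀ < 0.56 := by
    intro a ha hg
    constructor
    · by_contra hle
      push_neg at hle
      rcases eq_or_lt_of_le hle with h | h
      · rw [h] at hg; linarith [gA]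
      · have := gFun_mono ha h55 h
        linarith [gA]
    · by_contra hle
      push_neg at hle
      rcases eq_or_lt_of_le hle with h | h
      · rw [← h] at hg; linarith [gB]
      · have := gFun_mono h56 ha h
        linarith [gB]
  refine ⟨gFun_mono, ?_, bounds⟩
  obtain ⟨c, hc, hgc⟩ :=
    intermediate_value_Icc (by norm_num : (0.55:ℝ) ≤ 0.56) gFun_contOn
      ⟨le_of_lt gA, le_of_lt gB⟩
  have hcmem : c ∈ Set.Ioo (0:ℝ) 1 := by
    constructor
    · have := hc.1; norm_num at this ⊢; linarith
    · have := hc.2; norm_num at this ⊢; linarith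
  refine ⟨c, ⟨hcmem, hgc⟩, ?_⟩
  rintro y ⟨hy, hgy⟩
  rcases lt_trichotomy y c with h | h | h
  · have := gFun_mono hy hcmem h; rw [hgy, hgc] at this; linarith
  · exact h
  · have := gFun_mono hcmem hy h; rw [hgy, hgc] at this; linarith
end

section
/- For every real a with 0 < a < 1 there exist ε ∈ (0, min(a, 1 − a)) and a continuous function H : (1 − ε, 1 + ε) → ℝ with H(1) = 1 such that for every t ∈ (1 − ε, 1 + ε): (i) for every x strictly between a and t one has 0 < H(t)·x² + t − H(t)·t² < x (so that D(H(t), t, x) is defined and positive); (ii) ∫_a^t 1/D(H(t), t, x) dx = √(1 − a²); and (iii) H(t) is the unique real number in (1 − ε, 1 + ε) satisfying (i) and (ii) for this t. -/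
open Set MeasureTheory

variable {a δ H t x : ℝ}

section Core

-- collected box hypotheses
lemma dl_H_pos (ha : 0 < a) (ha1 : a < 1) (hδa : δ ≤ a^2/8) (hH : 1-δ ≤ H) : 0 < H := by
  nlinarith

lemma dl_t_gt_a (ha : 0 < a) (ha1 : a < 1) (hδ1a : δ ≤ (1-a)/2) (ht : 1-δ ≤ t) : a < t := by
  linarith

/-- `H*(x+t) - 1 ≥ a/4` on the box, for `x ≥ a`. -/
lemma dl_L0 (ha : 0 < a) (ha1 : a < 1) (hδa : δ ≤ a^2/8) (hδpos : 0 ≤ δ)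
    (hH : 1-δ ≤ H) (ht : 1-δ ≤ t) (hx : a ≤ x) : a/4 ≤ H*(x+t) - 1 := by
  have hH0 : 0 < H := dl_H_pos ha ha1 hδa hH
  have hδ8 : δ ≤ 1/8 := by nlinarith
  have h1 : (1-δ)*(a+(1-δ)) ≤ H*(x+t) :=
    mul_le_mul hH (by linarith) (by linarith) hH0.le
  nlinarith [sq_nonneg δ, sq_nonneg a]

/-- lower bound for the denominator `f` on `a ≤ x ≤ t`. -/
lemma dl_L1 (ha : 0 < a) (ha1 : a < 1) (hδa : δ ≤ a^2/8) (hδ1a : δ ≤ (1-a)/2) (hδpos : 0 ≤ δ)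
    (hH : 1-δ ≤ H) (hH' : H ≤ 1+δ) (ht : 1-δ ≤ t) (ht' : t ≤ 1+δ)
    (hx : a ≤ x) (hx' : x ≤ t) :
    3*a^2/8 ≤ H*x^2 + t - H*t^2 := by
  have hH0 : 0 < H := dl_H_pos ha ha1 hδa hH
  have hδ8 : δ ≤ 1/8 := by nlinarith
  have ha2 : H*a^2 ≤ H*x^2 := by nlinarith [mul_le_mul_of_nonneg_left (show a^2 ≤ x^2 by nlinarith) hH0.le]
  have hta : a < t := dl_t_gt_a ha ha1 hδ1a ht
  have h2 : t^2 - a^2 ≤ (1+δ)^2 - a^2 := by nlinarith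
  have h2' : 0 ≤ t^2 - a^2 := by nlinarith
  have h3 : H*(t^2-a^2) ≤ (1+δ)*((1+δ)^2 - a^2) :=
    mul_le_mul hH' h2 h2' (by linarith)
  have hδ2 : δ^2 ≤ δ/8 := by nlinarith
  have hδ3 : δ^3 ≤ δ/8 := by nlinarith [sq_nonneg δ]
  have key : 3*a^2/8 ≤ H*a^2 + t - H*t^2 := by nlinarith [sq_nonneg δ]
  linarith

lemma dl_factor : x - (H*x^2 + t - H*t^2) = (t-x)*(H*(x+t)-1) := by ring

end Core

/-- the nonneg of the integrand, unconditional -/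
lemma dl_nonneg (H t x : ℝ) : 0 ≤ 1 / delaunayD H t x :=
  div_nonneg zero_le_one (Real.sqrt_nonneg _)

/-- pointwise formula when `0 < f < x` -/
lemma dl_formula (h0 : 0 < H*x^2 + t - H*t^2) (hfx : H*x^2 + t - H*t^2 < x) :
    1 / delaunayD H t x
      = (H*x^2 + t - H*t^2) / Real.sqrt (x^2 - (H*x^2 + t - H*t^2)^2) := by
  set f := H*x^2 + t - H*t^2 with hf
  have hx0 : 0 < x := lt_trans h0 hfx
  have hpos : 0 < x^2 - f^2 := by nlinarith
  have harg : (x / f)^2 - 1 = (x^2 - f^2)/f^2 := by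
    field_simp
  have hD : delaunayD H t x = Real.sqrt (x^2 - f^2) / f := by
    rw [delaunayD, ← hf, harg, Real.sqrt_div (by positivity) (f^2),
      Real.sqrt_sq h0.le]
  rw [hD, one_div_div]

/-- vanishing when `x ≥ t` and `1 ≤ H*(x+t)` -/
lemma dl_vanish (hxt : t ≤ x) (ht0 : 0 < t) (hH1 : 1 ≤ H*(x+t)) :
    1 / delaunayD H t x = 0 := by
  set f := H*x^2 + t - H*t^2 with hf
  have hfx : x ≤ f := by nlinarith
  have hx0 : 0 < x := lt_of_lt_of_le ht0 hxt
  have harg : (x / f)^2 - 1 ≤ 0 := by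
    have hf0 : 0 < f := lt_of_lt_of_le hx0 hfx
    have : x / f ≤ 1 := (div_le_one hf0).mpr hfx
    have h2 : 0 ≤ x / f := div_nonneg hx0.le hf0.le
    nlinarith
  rw [delaunayD, ← hf, Real.sqrt_eq_zero_of_nonpos harg, div_zero]

/-- the key upper bound on `[a, t)` -/
lemma dl_bound (ha : 0 < a) (ha1 : a < 1) (hδa : δ ≤ a^2/8) (hδ1a : δ ≤ (1-a)/2) (hδpos : 0 ≤ δ)
    (hH : 1-δ ≤ H) (hH' : H ≤ 1+δ) (ht : 1-δ ≤ t) (ht' : t ≤ 1+δ)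
    (hx : a ≤ x) (hx' : x < t) :
    1 / delaunayD H t x ≤ (8/a) / Real.sqrt (t - x) := by
  set f := H*x^2 + t - H*t^2 with hf
  have hf0 : 0 < f := lt_of_lt_of_le (by positivity) (dl_L1 ha ha1 hδa hδ1a hδpos hH hH' ht ht' hx hx'.le)
  have hL0 : a/4 ≤ H*(x+t) - 1 := dl_L0 ha ha1 hδa hδpos hH ht hx
  have hfx : f < x := by nlinarith [dl_factor (H := H) (t := t) (x := x)]
  have hx0 : 0 < x := lt_trans hf0 hfx
  rw [dl_formula hf0 hfx, ← hf]
  have hxt2 : 0 < t - x := by linarith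
  have hkey : (a^2/16) * (t-x) ≤ x^2 - f^2 := by
    have h1 : x - f = (t-x)*(H*(x+t)-1) := dl_factor
    have h2 : (t-x)*(a/4) ≤ x - f := by
      rw [h1]; exact mul_le_mul_of_nonneg_left hL0 hxt2.le
    have h3 : a ≤ x + f := by linarith
    have h4 : x^2 - f^2 = (x-f)*(x+f) := by ring
    rw [h4]
    calc (a^2/16) * (t-x) = ((t-x)*(a/4)) * (a/4) := by ring
    _ ≤ (x-f)*(x+f) := by
        have h5 : (0:ℝ) ≤ (t-x)*(a/4) := by positivity
        apply mul_le_mul h2 (by linarith) (by linarith) (by linarith)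
  have hsq : (a/4) * Real.sqrt (t-x) ≤ Real.sqrt (x^2 - f^2) := by
    have : Real.sqrt ((a^2/16) * (t-x)) ≤ Real.sqrt (x^2 - f^2) := Real.sqrt_le_sqrt hkey
    rwa [Real.sqrt_mul (by positivity), show (a^2/16) = (a/4)^2 by ring,
      Real.sqrt_sq (by positivity)] at this
  have hs0 : 0 < Real.sqrt (t-x) := Real.sqrt_pos.mpr hxt2
  have hss : 0 < (a/4) * Real.sqrt (t-x) := by positivity
  have hδ8 : δ ≤ 1/8 := by nlinarith
  have hf2 : f ≤ 2 := by linarith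
  calc f / Real.sqrt (x^2 - f^2) ≤ 2 / ((a/4) * Real.sqrt (t-x)) :=
        div_le_div₀ (by norm_num) hf2 hss hsq
  _ = (8/a) / Real.sqrt (t - x) := by
      rw [div_mul_eq_div_div, show (2:ℝ)/(a/4) = 8/a by rw [div_div_eq_mul_div]; norm_num]

lemma dl_one_div_sqrt (y : ℝ) : 1 / Real.sqrt y = y ^ (-(1/2) : ℝ) := by
  rcases lt_trichotomy y 0 with h | h | h
  · rw [Real.sqrt_eq_zero_of_nonpos h.le, Real.rpow_def_of_neg h]
    rw [show -(1/2) * Real.pi = -(Real.pi/2) by ring, Real.cos_neg, Real.cos_pi_div_two]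
    norm_num
  · simp [h, Real.zero_rpow (by norm_num : (-(1/2):ℝ) ≠ 0)]
  · rw [Real.rpow_neg h.le, ← Real.sqrt_eq_rpow, one_div]

lemma dl_bound_integrable (ha : 0 < a) (s t : ℝ) :
    IntervalIntegrable (fun x => (8/a) / Real.sqrt (t - x)) volume s t := by
  have h : (fun x => (8/a) / Real.sqrt (t-x)) = fun x => (8/a) * ((t-x) ^ (-(1/2):ℝ)) := by
    funext x
    rw [← dl_one_div_sqrt, div_eq_mul_one_div]
  rw [h]
  have h2 := ((intervalIntegral.intervalIntegrable_rpow' (r := -(1/2)) (by norm_num)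
    (a := 0) (b := t - s)).comp_sub_left t).symm
  simpa using h2.const_mul (8/a)

lemma dl_meas (H t : ℝ) : Measurable (fun x => 1 / delaunayD H t x) := by
  unfold delaunayD
  simp only [one_div]
  exact (Real.continuous_sqrt.measurable.comp
    (((measurable_id.div (((measurable_const.mul (measurable_id.pow_const 2)).add_const t).sub
      measurable_const)).pow_const 2).sub_const 1)).inv

lemma dl_integrable (ha : 0 < a) (ha1 : a < 1) (hδa : δ ≤ a^2/8) (hδ1a : δ ≤ (1-a)/2)
    (hδpos : 0 ≤ δ) (hH : 1-δ ≤ H) (hH' : H ≤ 1+δ) (ht : 1-δ ≤ t) (ht' : t ≤ 1+δ)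
    {s : ℝ} (hs : a ≤ s) (hst : s ≤ t) :
    IntervalIntegrable (fun x => 1 / delaunayD H t x) volume s t := by
  apply IntervalIntegrable.mono_fun (dl_bound_integrable ha s t)
    ((dl_meas H t).aestronglyMeasurable)
  rw [Set.uIoc_of_le hst]
  refine (ae_restrict_iff' measurableSet_Ioc).mpr (Filter.Eventually.of_forall fun x hx => ?_)
  show ‖1 / delaunayD H t x‖ ≤ ‖(8/a) / Real.sqrt (t - x)‖
  rw [Real.norm_eq_abs, Real.norm_eq_abs, abs_of_nonneg (dl_nonneg H t x),
    abs_of_nonneg (by positivity)]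
  rcases lt_or_eq_of_le hx.2 with h | h
  · exact dl_bound ha ha1 hδa hδ1a hδpos hH hH' ht ht' (le_trans hs hx.1.le) h
  · rw [h, dl_vanish le_rfl (by linarith) (by nlinarith [dl_L0 ha ha1 hδa hδpos hH ht (hs.trans hst : a ≤ t)])]
    positivity

lemma dl_integral_bound_aux (ha : 0 < a) {s : ℝ} (hst : s ≤ t) :
    (∫ x in s..t, (8/a) / Real.sqrt (t - x)) = (16/a) * Real.sqrt (t - s) := by
  have h : (fun x => (8/a) / Real.sqrt (t-x)) = fun x => (8/a) * ((t-x) ^ (-(1/2):ℝ)) := by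
    funext x; rw [← dl_one_div_sqrt, div_eq_mul_one_div]
  rw [h, intervalIntegral.integral_const_mul,
    intervalIntegral.integral_comp_sub_left (fun y => y ^ (-(1/2):ℝ)) t,
    integral_rpow (Or.inl (by norm_num)), sub_self]
  rw [show -(1/2) + 1 = (1/2 : ℝ) by norm_num, Real.zero_rpow (by norm_num), ← Real.sqrt_eq_rpow]
  field_simp
  ring

lemma dl_remainder (ha : 0 < a) (ha1 : a < 1) (hδa : δ ≤ a^2/8) (hδ1a : δ ≤ (1-a)/2)
    (hδpos : 0 ≤ δ) (hH : 1-δ ≤ H) (hH' : H ≤ 1+δ) (ht : 1-δ ≤ t) (ht' : t ≤ 1+δ)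
    {s : ℝ} (hs : a ≤ s) (hst : s ≤ t) :
    |∫ x in s..t, 1 / delaunayD H t x| ≤ (16/a) * Real.sqrt (t - s) := by
  have h1 : |∫ x in s..t, 1 / delaunayD H t x| ≤ ∫ x in s..t, |1 / delaunayD H t x| :=
    intervalIntegral.abs_integral_le_integral_abs hst
  have h2 : (∫ x in s..t, |1 / delaunayD H t x|) ≤ ∫ x in s..t, (8/a) / Real.sqrt (t - x) := by
    apply intervalIntegral.integral_mono_on hst
      ((dl_integrable ha ha1 hδa hδ1a hδpos hH hH' ht ht' hs hst).abs)
      (dl_bound_integrable ha s t)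
    intro x hx
    rw [abs_of_nonneg (dl_nonneg H t x)]
    rcases lt_or_eq_of_le hx.2 with h | h
    · exact dl_bound ha ha1 hδa hδ1a hδpos hH hH' ht ht' (le_trans hs hx.1) h
    · rw [h, dl_vanish le_rfl (by linarith) (by nlinarith [dl_L0 ha ha1 hδa hδpos hH ht (hs.trans hst : a ≤ t)])]
      positivity
  rw [dl_integral_bound_aux ha hst] at h2
  linarith

lemma dl_value (ha : 0 < a) (ha1 : a < 1) :
    (∫ x in a..1, 1 / delaunayD 1 1 x) = Real.sqrt (1 - a^2) := by
  have hint : IntervalIntegrable (fun x => 1 / delaunayD 1 1 x) volume a 1 :=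
    dl_integrable (δ := 0) ha ha1 (by positivity) (by linarith) le_rfl
      (by norm_num) (by norm_num) (by norm_num) (by norm_num) le_rfl ha1.le
  have key := intervalIntegral.integral_eq_sub_of_hasDeriv_right_of_le ha1.le
    (f := fun x => -Real.sqrt (1 - x^2)) (f' := fun x => 1 / delaunayD 1 1 x)
    (by fun_prop) ?_ hint
  · rw [key]
    norm_num
  · intro x hx
    have hx0 : 0 < x := lt_trans ha hx.1
    have hx1 : x < 1 := hx.2
    have h1x : 0 < 1 - x^2 := by nlinarith
    have hφ : 1 / delaunayD 1 1 x = x / Real.sqrt (1 - x^2) := by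
      have h0 : (0:ℝ) < 1*x^2 + 1 - 1*1^2 := by nlinarith
      have hlt : 1*x^2 + 1 - 1*1^2 < x := by nlinarith
      rw [dl_formula h0 hlt]
      have : x^2 - (1*x^2 + 1 - 1*1^2)^2 = x^2 * (1 - x^2) := by ring
      rw [this, Real.sqrt_mul (sq_nonneg x), Real.sqrt_sq hx0.le]
      rw [show 1*x^2 + 1 - 1*1^2 = x*x by ring, mul_div_mul_left _ _ (ne_of_gt hx0)]
    rw [hφ]
    have hd : HasDerivAt (fun y : ℝ => -Real.sqrt (1 - y^2)) (x / Real.sqrt (1 - x^2)) x := by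
      have hu : HasDerivAt (fun y : ℝ => 1 - y^2) (-(2*x)) x := by
        simpa using ((hasDerivAt_pow 2 x).const_sub 1)
      have := (hu.sqrt (by positivity)).neg
      exact this.congr_deriv (by rw [neg_div, neg_neg, mul_div_mul_left _ _ (two_ne_zero' ℝ)])
    exact hd.hasDerivWithinAt

lemma dl_strict_anti (ha : 0 < a) (ha1 : a < 1) (hδa : δ ≤ a^2/8) (hδ1a : δ ≤ (1-a)/2)
    (hδpos : 0 ≤ δ) (ht : 1-δ ≤ t) (ht' : t ≤ 1+δ)
    {H₁ H₂ : ℝ} (hH₁ : 1-δ ≤ H₁) (hH₁' : H₁ ≤ 1+δ) (hH₂ : 1-δ ≤ H₂) (hH₂' : H₂ ≤ 1+δ)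
    (h12 : H₁ < H₂) :
    (∫ x in a..t, 1 / delaunayD H₂ t x) < (∫ x in a..t, 1 / delaunayD H₁ t x) := by
  have hat : a < t := dl_t_gt_a ha ha1 hδ1a ht
  have hi₁ := dl_integrable ha ha1 hδa hδ1a hδpos hH₁ hH₁' ht ht' le_rfl hat.le
  have hi₂ := dl_integrable ha ha1 hδa hδ1a hδpos hH₂ hH₂' ht ht' le_rfl hat.le
  have hpos : ∀ x ∈ Ioo a t, 0 < 1 / delaunayD H₁ t x - 1 / delaunayD H₂ t x := by
    intro x hx
    have hx0 : 0 < x := lt_trans ha hx.1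
    have hf₂0 : (0:ℝ) < H₂*x^2 + t - H₂*t^2 :=
      lt_of_lt_of_le (by positivity) (dl_L1 ha ha1 hδa hδ1a hδpos hH₂ hH₂' ht ht' hx.1.le hx.2.le)
    have hf₁x : H₁*x^2 + t - H₁*t^2 < x := by
      nlinarith [dl_factor (H := H₁) (t := t) (x := x),
        dl_L0 ha ha1 hδa hδpos hH₁ ht hx.1.le, hx.2]
    have h21 : H₂*x^2 + t - H₂*t^2 < H₁*x^2 + t - H₁*t^2 := by nlinarith [hx.2, hx0]
    rw [dl_formula (lt_trans hf₂0 h21) hf₁x, dl_formula hf₂0 (lt_trans h21 hf₁x)]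
    have hs₁ : (0:ℝ) < x^2 - (H₁*x^2 + t - H₁*t^2)^2 := by nlinarith
    have hs₁₂ : x^2 - (H₁*x^2 + t - H₁*t^2)^2 < x^2 - (H₂*x^2 + t - H₂*t^2)^2 := by nlinarith
    have hq : Real.sqrt (x^2 - (H₁*x^2 + t - H₁*t^2)^2)
        < Real.sqrt (x^2 - (H₂*x^2 + t - H₂*t^2)^2) := Real.sqrt_lt_sqrt hs₁.le hs₁₂
    have hq0 : 0 < Real.sqrt (x^2 - (H₁*x^2 + t - H₁*t^2)^2) := Real.sqrt_pos.mpr hs₁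
    have : (H₂*x^2 + t - H₂*t^2) / Real.sqrt (x^2 - (H₂*x^2 + t - H₂*t^2)^2)
        < (H₁*x^2 + t - H₁*t^2) / Real.sqrt (x^2 - (H₁*x^2 + t - H₁*t^2)^2) := by
      gcongr
      linarith
    linarith
  have hfi := hi₁.sub hi₂
  have h := intervalIntegral.intervalIntegral_pos_of_pos_on hfi hpos hat
  rw [intervalIntegral.integral_sub hi₁ hi₂] at h
  linarith

lemma dl_ae_ne (t : ℝ) : ∀ᵐ (x : ℝ), x ≠ t := by
  have : {x : ℝ | ¬ x ≠ t} = {t} := by ext x; simp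
  rw [MeasureTheory.ae_iff, this]
  exact Real.volume_singleton

lemma dl_contH (ha : 0 < a) (ha1 : a < 1) (hδa : δ ≤ a^2/8) (hδ1a : δ ≤ (1-a)/2)
    (hδpos : 0 ≤ δ) (ht : 1-δ ≤ t) (ht' : t ≤ 1+δ)
    {H₀ : ℝ} (hH₀ : 1-δ < H₀) (hH₀' : H₀ < 1+δ) :
    ContinuousAt (fun h => ∫ x in a..t, 1 / delaunayD h t x) H₀ := by
  have hat : a < t := dl_t_gt_a ha ha1 hδ1a ht
  apply intervalIntegral.continuousAt_of_dominated_interval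
    (bound := fun x => (8/a) / Real.sqrt (t - x))
  · exact Filter.Eventually.of_forall fun h => (dl_meas h t).aestronglyMeasurable
  · filter_upwards [Icc_mem_nhds hH₀ hH₀'] with h hh
    refine Filter.Eventually.of_forall fun x hx => ?_
    rw [Set.uIoc_of_le hat.le] at hx
    rw [Real.norm_eq_abs, abs_of_nonneg (dl_nonneg h t x)]
    rcases lt_or_eq_of_le hx.2 with heq | heq
    · exact dl_bound ha ha1 hδa hδ1a hδpos hh.1 hh.2 ht ht' hx.1.le heq
    · rw [heq, dl_vanish le_rfl (by linarith)
        (by nlinarith [dl_L0 ha ha1 hδa hδpos hh.1 ht (hat.le : a ≤ t)])]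
      positivity
  · exact dl_bound_integrable ha a t
  · filter_upwards [dl_ae_ne t] with x hxt hxI
    rw [Set.uIoc_of_le hat.le] at hxI
    have hx : x ∈ Ioo a t := ⟨hxI.1, lt_of_le_of_ne hxI.2 hxt⟩
    have hx0 : 0 < x := lt_trans ha hx.1
    have hf₀ : (0:ℝ) < H₀*x^2 + t - H₀*t^2 :=
      lt_of_lt_of_le (by positivity)
        (dl_L1 ha ha1 hδa hδ1a hδpos hH₀.le hH₀'.le ht ht' hx.1.le hx.2.le)
    have hf₀x : H₀*x^2 + t - H₀*t^2 < x := by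
      nlinarith [dl_factor (H := H₀) (t := t) (x := x),
        dl_L0 ha ha1 hδa hδpos hH₀.le ht hx.1.le, hx.2]
    have c1 : ContinuousAt (fun h : ℝ => h*x^2 + t - h*t^2) H₀ := by fun_prop
    have c2 : ContinuousAt (fun h : ℝ => x/(h*x^2 + t - h*t^2)) H₀ :=
      continuousAt_const.div c1 (ne_of_gt hf₀)
    have c3 : ContinuousAt (fun h : ℝ =>
        Real.sqrt ((x/(h*x^2 + t - h*t^2))^2 - 1)) H₀ :=
      Real.continuous_sqrt.continuousAt.comp ((c2.pow 2).sub continuousAt_const)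
    have harg : (0:ℝ) < (x/(H₀*x^2 + t - H₀*t^2))^2 - 1 := by
      have h1 : 1 < x/(H₀*x^2 + t - H₀*t^2) := (one_lt_div hf₀).mpr hf₀x
      nlinarith
    have hne : Real.sqrt ((x/(H₀*x^2 + t - H₀*t^2))^2 - 1) ≠ 0 :=
      ne_of_gt (Real.sqrt_pos.mpr harg)
    exact continuousAt_const.div c3 hne

lemma dl_contA (ha : 0 < a) (ha1 : a < 1) (hδa : δ ≤ a^2/8) (hδ1a : δ ≤ (1-a)/2)
    (hδpos : 0 ≤ δ) (hH : 1-δ ≤ H) (hH' : H ≤ 1+δ)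
    {t₀ s : ℝ} (ht₀ : 1-δ < t₀) (ht₀' : t₀ < 1+δ) (hs : a ≤ s) (hst : s < t₀) :
    ContinuousAt (fun t => ∫ x in a..s, 1 / delaunayD H t x) t₀ := by
  apply intervalIntegral.continuousAt_of_dominated_interval
    (bound := fun _ => (8/a) / Real.sqrt ((t₀ - s)/2))
  · exact Filter.Eventually.of_forall fun t => (dl_meas H t).aestronglyMeasurable
  · have hmem : Ioo (max (1-δ) ((t₀+s)/2)) (1+δ) ∈ nhds t₀ :=
      Ioo_mem_nhds (max_lt ht₀ (by linarith)) ht₀'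
    filter_upwards [hmem] with t htm
    refine Filter.Eventually.of_forall fun x hx => ?_
    rw [Set.uIoc_of_le (by linarith : a ≤ s)] at hx
    have htb : 1-δ < t := lt_of_le_of_lt (le_max_left _ _) htm.1
    have hts : (t₀+s)/2 < t := lt_of_le_of_lt (le_max_right _ _) htm.1
    have hxt : x < t := by cases hx; linarith
    have hgap : (t₀ - s)/2 ≤ t - x := by cases hx; linarith
    rw [Real.norm_eq_abs, abs_of_nonneg (dl_nonneg H t x)]
    calc 1 / delaunayD H t x ≤ (8/a) / Real.sqrt (t - x) :=
          dl_bound ha ha1 hδa hδ1a hδpos hH hH' htb.le htm.2.le hx.1.le hxt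
    _ ≤ (8/a) / Real.sqrt ((t₀ - s)/2) := by
        apply div_le_div_of_nonneg_left (by positivity)
          (Real.sqrt_pos.mpr (by linarith)) (Real.sqrt_le_sqrt hgap)
  · exact intervalIntegrable_const
  · refine Filter.Eventually.of_forall fun x hxI => ?_
    rw [Set.uIoc_of_le (by linarith : a ≤ s)] at hxI
    have hx : x ∈ Ioo a t₀ := ⟨hxI.1, lt_of_le_of_lt hxI.2 hst⟩
    have hx0 : 0 < x := lt_trans ha hx.1
    have hf₀ : (0:ℝ) < H*x^2 + t₀ - H*t₀^2 :=
      lt_of_lt_of_le (by positivity)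
        (dl_L1 ha ha1 hδa hδ1a hδpos hH hH' ht₀.le ht₀'.le hx.1.le hx.2.le)
    have hf₀x : H*x^2 + t₀ - H*t₀^2 < x := by
      nlinarith [dl_factor (H := H) (t := t₀) (x := x),
        dl_L0 ha ha1 hδa hδpos hH ht₀.le hx.1.le, hx.2]
    have c1 : ContinuousAt (fun t : ℝ => H*x^2 + t - H*t^2) t₀ := by fun_prop
    have c2 : ContinuousAt (fun t : ℝ => x/(H*x^2 + t - H*t^2)) t₀ :=
      continuousAt_const.div c1 (ne_of_gt hf₀)
    have c3 : ContinuousAt (fun t : ℝ =>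
        Real.sqrt ((x/(H*x^2 + t - H*t^2))^2 - 1)) t₀ :=
      Real.continuous_sqrt.continuousAt.comp ((c2.pow 2).sub continuousAt_const)
    have harg : (0:ℝ) < (x/(H*x^2 + t₀ - H*t₀^2))^2 - 1 := by
      have h1 : 1 < x/(H*x^2 + t₀ - H*t₀^2) := (one_lt_div hf₀).mpr hf₀x
      nlinarith
    exact continuousAt_const.div c3 (ne_of_gt (Real.sqrt_pos.mpr harg))

set_option maxHeartbeats 1000000 in
lemma dl_contT (ha : 0 < a) (ha1 : a < 1) (hδa : δ ≤ a^2/8) (hδ1a : δ ≤ (1-a)/2)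
    (hδpos : 0 ≤ δ) (hH : 1-δ ≤ H) (hH' : H ≤ 1+δ)
    {t₀ : ℝ} (ht₀ : 1-δ < t₀) (ht₀' : t₀ < 1+δ) :
    ContinuousAt (fun t => ∫ x in a..t, 1 / delaunayD H t x) t₀ := by
  have hat₀ : a < t₀ := dl_t_gt_a ha ha1 hδ1a ht₀.le
  rw [Metric.continuousAt_iff]
  intro e he
  set η := min (min ((t₀ - a)/2) ((t₀ - (1-δ))/2)) ((e*a/100)^2) with hηdef
  have hη0 : 0 < η := by
    apply lt_min (lt_min (by linarith) (by linarith))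
    positivity
  have hηa : η ≤ (t₀ - a)/2 := le_trans (min_le_left _ _) (min_le_left _ _)
  have hηδ : η ≤ (t₀ - (1-δ))/2 := le_trans (min_le_left _ _) (min_le_right _ _)
  have hηe : η ≤ (e*a/100)^2 := min_le_right _ _
  set s := t₀ - η with hsdef
  have hs : a ≤ s := by simp only [hsdef]; linarith
  have hst : s < t₀ := by simp only [hsdef]; linarith
  have hA := dl_contA ha ha1 hδa hδ1a hδpos hH hH' ht₀ ht₀' hs hst
  rw [Metric.continuousAt_iff] at hA
  obtain ⟨d₂, hd₂0, hd₂⟩ := hA (e/3) (by linarith)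
  refine ⟨min (min (η/2) d₂) ((1+δ - t₀)/2),
    lt_min (lt_min (by linarith) hd₂0) (by linarith), fun {t} hdist => ?_⟩
  rw [Real.dist_eq] at hdist
  have hdm := abs_lt.mp (lt_of_lt_of_le hdist (le_trans (min_le_left _ _) (min_le_left _ _)))
  have hdd2 : |t - t₀| < d₂ := lt_of_lt_of_le hdist (le_trans (min_le_left _ _) (min_le_right _ _))
  have hdbox := abs_lt.mp (lt_of_lt_of_le hdist (min_le_right _ _))
  have htlo : 1-δ < t := by linarith [hdm.1]
  have hthi : t < 1+δ := by linarith [hdbox.2]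
  have hst2 : s ≤ t := by simp only [hsdef]; linarith [hdm.1]
  have hat : a ≤ t := le_trans hs hst2
  -- the splittings
  have hit := dl_integrable ha ha1 hδa hδ1a hδpos hH hH' htlo.le hthi.le le_rfl hat
  have hit1 : IntervalIntegrable (fun x => 1 / delaunayD H t x) volume a s := by
    apply hit.mono_set
    rw [Set.uIcc_of_le hs, Set.uIcc_of_le hat]
    exact Icc_subset_Icc le_rfl hst2
  have hit2 := dl_integrable ha ha1 hδa hδ1a hδpos hH hH' htlo.le hthi.le hs hst2
  have hsplit := intervalIntegral.integral_add_adjacent_intervals hit1 hit2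
  have hit₀ := dl_integrable ha ha1 hδa hδ1a hδpos hH hH' ht₀.le ht₀'.le le_rfl hat₀.le
  have hit₀1 : IntervalIntegrable (fun x => 1 / delaunayD H t₀ x) volume a s := by
    apply hit₀.mono_set
    rw [Set.uIcc_of_le hs, Set.uIcc_of_le hat₀.le]
    exact Icc_subset_Icc le_rfl hst.le
  have hit₀2 := dl_integrable ha ha1 hδa hδ1a hδpos hH hH' ht₀.le ht₀'.le hs hst.le
  have hsplit₀ := intervalIntegral.integral_add_adjacent_intervals hit₀1 hit₀2
  -- remainder bounds
  have hsq : Real.sqrt (t - s) ≤ 2*(e*a/100) := by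
    have h2 : t - s ≤ (2*(e*a/100))^2 := by
      have h3 : t - s ≤ 2*η := by simp only [hsdef]; linarith [hdm.2]
      nlinarith [sq_nonneg (e*a/100)]
    calc Real.sqrt (t - s) ≤ Real.sqrt ((2*(e*a/100))^2) := Real.sqrt_le_sqrt h2
    _ = 2*(e*a/100) := Real.sqrt_sq (by positivity)
  have hsq₀ : Real.sqrt (t₀ - s) ≤ 2*(e*a/100) := by
    have h2 : t₀ - s ≤ (2*(e*a/100))^2 := by
      have h3 : t₀ - s ≤ 2*η := by simp only [hsdef]; linarith
      nlinarith [sq_nonneg (e*a/100)]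
    calc Real.sqrt (t₀ - s) ≤ Real.sqrt ((2*(e*a/100))^2) := Real.sqrt_le_sqrt h2
    _ = 2*(e*a/100) := Real.sqrt_sq (by positivity)
  have hconst : (16/a) * (2*(e*a/100)) = 32*e/100 := by field_simp; ring
  have hRt : |∫ x in s..t, 1 / delaunayD H t x| ≤ 32*e/100 := by
    calc |∫ x in s..t, 1 / delaunayD H t x| ≤ (16/a) * Real.sqrt (t - s) :=
          dl_remainder ha ha1 hδa hδ1a hδpos hH hH' htlo.le hthi.le hs hst2
    _ ≤ (16/a) * (2*(e*a/100)) := by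
        apply mul_le_mul_of_nonneg_left hsq (by positivity)
    _ = 32*e/100 := hconst
  have hRt₀ : |∫ x in s..t₀, 1 / delaunayD H t₀ x| ≤ 32*e/100 := by
    calc |∫ x in s..t₀, 1 / delaunayD H t₀ x| ≤ (16/a) * Real.sqrt (t₀ - s) :=
          dl_remainder ha ha1 hδa hδ1a hδpos hH hH' ht₀.le ht₀'.le hs hst.le
    _ ≤ (16/a) * (2*(e*a/100)) := by
        apply mul_le_mul_of_nonneg_left hsq₀ (by positivity)
    _ = 32*e/100 := hconst
  have hAd : |(∫ x in a..s, 1 / delaunayD H t x) - ∫ x in a..s, 1 / delaunayD H t₀ x| < e/3 := by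
    have := hd₂ (by rwa [Real.dist_eq] : dist t t₀ < d₂)
    rwa [Real.dist_eq] at this
  rw [Real.dist_eq, ← hsplit, ← hsplit₀]
  have habs3 := abs_abs (∫ x in s..t, 1 / delaunayD H t x)
  calc |(∫ x in a..s, 1 / delaunayD H t x) + (∫ x in s..t, 1 / delaunayD H t x)
      - ((∫ x in a..s, 1 / delaunayD H t₀ x) + ∫ x in s..t₀, 1 / delaunayD H t₀ x)|
      ≤ |(∫ x in a..s, 1 / delaunayD H t x) - ∫ x in a..s, 1 / delaunayD H t₀ x|
        + |∫ x in s..t, 1 / delaunayD H t x| + |∫ x in s..t₀, 1 / delaunayD H t₀ x| := by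
        rw [show (∫ x in a..s, 1 / delaunayD H t x) + (∫ x in s..t, 1 / delaunayD H t x)
          - ((∫ x in a..s, 1 / delaunayD H t₀ x) + ∫ x in s..t₀, 1 / delaunayD H t₀ x)
          = ((∫ x in a..s, 1 / delaunayD H t x) - ∫ x in a..s, 1 / delaunayD H t₀ x)
            + ((∫ x in s..t, 1 / delaunayD H t x) - ∫ x in s..t₀, 1 / delaunayD H t₀ x) by ring]
        calc |((∫ x in a..s, 1 / delaunayD H t x) - ∫ x in a..s, 1 / delaunayD H t₀ x)
            + ((∫ x in s..t, 1 / delaunayD H t x) - ∫ x in s..t₀, 1 / delaunayD H t₀ x)|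
            ≤ |(∫ x in a..s, 1 / delaunayD H t x) - ∫ x in a..s, 1 / delaunayD H t₀ x|
              + |(∫ x in s..t, 1 / delaunayD H t x) - ∫ x in s..t₀, 1 / delaunayD H t₀ x| :=
              abs_add_le _ _
        _ ≤ _ := by
              have h9 := abs_sub (∫ x in s..t, 1 / delaunayD H t x)
                (∫ x in s..t₀, 1 / delaunayD H t₀ x)
              linarith
  _ < e := by linarith


set_option maxHeartbeats 1000000 in
/-- Existence and local uniqueness of the mean-curvature function `t ↦ Hᵃ(t)`
of the family of Delaunay pieces through the circle of height `a`:
`Hᵃ` is continuous near `1`, `Hᵃ(1) = 1`, the denominators are admissible,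
`∫_a^t dx/D(Hᵃ(t),t,x) = √(1−a²)`, and `Hᵃ(t)` is the unique such value near `1`. -/
theorem delaunay_H_exists_unique (a : ℝ) (ha : a ∈ Set.Ioo (0:ℝ) 1) :
    ∃ ε : ℝ, 0 < ε ∧ ε < min a (1 - a) ∧
    ∃ H : ℝ → ℝ, ContinuousOn H (Set.Ioo (1 - ε) (1 + ε)) ∧ H 1 = 1 ∧
    ∀ t ∈ Set.Ioo (1 - ε) (1 + ε),
      (∀ x ∈ Set.Ioo a t,
        0 < H t * x ^ 2 + t - H t * t ^ 2 ∧ H t * x ^ 2 + t - H t * t ^ 2 < x) ∧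
      (∫ x in a..t, 1 / delaunayD (H t) t x) = Real.sqrt (1 - a ^ 2) ∧
      (∀ H' ∈ Set.Ioo (1 - ε) (1 + ε),
        ((∀ x ∈ Set.Ioo a t,
          0 < H' * x ^ 2 + t - H' * t ^ 2 ∧ H' * x ^ 2 + t - H' * t ^ 2 < x) ∧
         (∫ x in a..t, 1 / delaunayD H' t x) = Real.sqrt (1 - a ^ 2)) → H' = H t) := by
  classical
  obtain ⟨ha0, ha1⟩ := ha
  set δ : ℝ := min (a^2/8) ((1-a)/2) with hδdef
  have hδa : δ ≤ a^2/8 := min_le_left _ _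
  have hδ1a : δ ≤ (1-a)/2 := min_le_right _ _
  have hδ0 : 0 < δ := lt_min (by positivity) (by linarith)
  set ε₁ : ℝ := δ/2 with hε₁def
  have hε₁0 : 0 < ε₁ := by positivity
  -- strict antitonicity in H
  have hanti : ∀ t, 1-δ ≤ t → t ≤ 1+δ → ∀ h₁ h₂, 1-δ ≤ h₁ → h₁ ≤ 1+δ →
      1-δ ≤ h₂ → h₂ ≤ 1+δ → h₁ < h₂ →
      (∫ x in a..t, 1 / delaunayD h₂ t x) < ∫ x in a..t, 1 / delaunayD h₁ t x :=
    fun t ht ht' h₁ h₂ a1 a2 a3 a4 h12 =>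
      dl_strict_anti ha0 ha1 hδa hδ1a hδ0.le ht ht' a1 a2 a3 a4 h12
  have hG11 : (∫ x in a..1, 1 / delaunayD 1 1 x) = Real.sqrt (1 - a^2) := dl_value ha0 ha1
  -- bracketing at t = 1
  have hgt1 : Real.sqrt (1 - a^2) < ∫ x in a..1, 1 / delaunayD (1-ε₁) 1 x := by
    rw [← hG11]
    exact hanti 1 (by linarith) (by linarith) (1-ε₁) 1 (by linarith) (by linarith)
      (by linarith) (by linarith) (by linarith)
  have hlt1 : (∫ x in a..1, 1 / delaunayD (1+ε₁) 1 x) < Real.sqrt (1 - a^2) := by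
    rw [← hG11]
    exact hanti 1 (by linarith) (by linarith) 1 (1+ε₁) (by linarith) (by linarith)
      (by linarith) (by linarith) (by linarith)
  -- continuity in t of the two bracketing curves at t = 1
  have hcl := dl_contT (H := 1-ε₁) ha0 ha1 hδa hδ1a hδ0.le (by linarith) (by linarith)
    (t₀ := 1) (by linarith) (by linarith)
  have hcu := dl_contT (H := 1+ε₁) ha0 ha1 hδa hδ1a hδ0.le (by linarith) (by linarith)
    (t₀ := 1) (by linarith) (by linarith)
  have hev : ∀ᶠ t in nhds 1, (Real.sqrt (1 - a^2) < ∫ x in a..t, 1 / delaunayD (1-ε₁) t x)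
      ∧ (∫ x in a..t, 1 / delaunayD (1+ε₁) t x) < Real.sqrt (1 - a^2) :=
    (hcl.eventually (eventually_gt_nhds hgt1)).and (hcu.eventually (eventually_lt_nhds hlt1))
  obtain ⟨r, hr0, hr⟩ := Metric.eventually_nhds_iff.mp hev
  set ε : ℝ := min (min (r/2) (δ/2)) (min a (1-a) / 2) with hεdef
  have hε0 : 0 < ε := by
    apply lt_min (lt_min (by linarith) (by linarith))
    rcases min_cases a (1-a) with ⟨h,_⟩|⟨h,_⟩ <;> rw [h] <;> linarith
  have hεr : ε ≤ r/2 := le_trans (min_le_left _ _) (min_le_left _ _)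
  have hεδ : ε ≤ δ/2 := le_trans (min_le_left _ _) (min_le_right _ _)
  have hεa : ε ≤ min a (1-a)/2 := min_le_right _ _
  have hεlt : ε < min a (1-a) := by
    have hm0 : 0 < min a (1-a) := lt_min (by linarith) (by linarith)
    linarith
  -- t-box membership
  have htbox : ∀ t ∈ Set.Ioo (1-ε) (1+ε), 1-δ < t ∧ t < 1+δ := by
    intro t ht; constructor <;> [linarith [ht.1]; linarith [ht.2]]
  have hbr : ∀ t ∈ Set.Ioo (1-ε) (1+ε),
      (Real.sqrt (1 - a^2) < ∫ x in a..t, 1 / delaunayD (1-ε₁) t x)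
      ∧ (∫ x in a..t, 1 / delaunayD (1+ε₁) t x) < Real.sqrt (1 - a^2) := by
    intro t ht
    apply hr
    rw [Real.dist_eq, abs_lt]
    constructor <;> [linarith [ht.1]; linarith [ht.2]]
  -- existence via IVT
  have hIVT : ∀ t ∈ Set.Ioo (1-ε) (1+ε), ∃ h' ∈ Set.Ioo (1-ε₁) (1+ε₁),
      (∫ x in a..t, 1 / delaunayD h' t x) = Real.sqrt (1 - a^2) := by
    intro t ht
    obtain ⟨htb1, htb2⟩ := htbox t ht
    have hcont : ContinuousOn (fun h => ∫ x in a..t, 1 / delaunayD h t x)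
        (Set.Icc (1-ε₁) (1+ε₁)) := by
      intro h hh
      exact (dl_contH ha0 ha1 hδa hδ1a hδ0.le htb1.le htb2.le
        (by have := hh.1; simp only [hε₁def] at *; linarith)
        (by have := hh.2; simp only [hε₁def] at *; linarith)).continuousWithinAt
    have him := intermediate_value_Ioo' (by linarith : 1-ε₁ ≤ 1+ε₁) hcont
      (show Real.sqrt (1 - a^2) ∈ Set.Ioo _ _ from ⟨(hbr t ht).2, (hbr t ht).1⟩)
    obtain ⟨h', hh', hval⟩ := him
    exact ⟨h', hh', hval⟩
  -- uniqueness within the δ-box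
  have huniq : ∀ t, 1-δ ≤ t → t ≤ 1+δ → ∀ h₁ h₂,
      1-δ ≤ h₁ → h₁ ≤ 1+δ → 1-δ ≤ h₂ → h₂ ≤ 1+δ →
      (∫ x in a..t, 1 / delaunayD h₁ t x) = Real.sqrt (1 - a^2) →
      (∫ x in a..t, 1 / delaunayD h₂ t x) = Real.sqrt (1 - a^2) → h₁ = h₂ := by
    intro t ht ht' h₁ h₂ b1 b2 b3 b4 e1 e2
    rcases lt_trichotomy h₁ h₂ with h | h | h
    · have := hanti t ht ht' h₁ h₂ b1 b2 b3 b4 h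
      rw [e1, e2] at this; exact absurd this (lt_irrefl _)
    · exact h
    · have := hanti t ht ht' h₂ h₁ b3 b4 b1 b2 h
      rw [e1, e2] at this; exact absurd this (lt_irrefl _)
  -- the solution function
  set Hf : ℝ → ℝ := fun t =>
    if h : ∃ h' ∈ Set.Ioo (1-ε₁) (1+ε₁),
        (∫ x in a..t, 1 / delaunayD h' t x) = Real.sqrt (1 - a^2)
    then h.choose else 1 with hHfdef
  have hHfspec : ∀ t ∈ Set.Ioo (1-ε) (1+ε), Hf t ∈ Set.Ioo (1-ε₁) (1+ε₁) ∧
      (∫ x in a..t, 1 / delaunayD (Hf t) t x) = Real.sqrt (1 - a^2) := by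
    intro t ht
    have hext := hIVT t ht
    simp only [hHfdef, dif_pos hext]
    exact ⟨hext.choose_spec.1, hext.choose_spec.2⟩
  have hone : (1:ℝ) ∈ Set.Ioo (1-ε) (1+ε) := ⟨by linarith, by linarith⟩
  have hHfbox : ∀ t ∈ Set.Ioo (1-ε) (1+ε), 1-δ ≤ Hf t ∧ Hf t ≤ 1+δ := by
    intro t ht
    obtain ⟨⟨u1, u2⟩, -⟩ := hHfspec t ht
    constructor <;> simp only [hε₁def] at * <;> linarith
  have hHf1 : Hf 1 = 1 := by
    obtain ⟨hm, hv⟩ := hHfspec 1 hone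
    exact huniq 1 (by linarith) (by linarith) (Hf 1) 1
      (hHfbox 1 hone).1 (hHfbox 1 hone).2 (by linarith) (by linarith) hv hG11
  -- continuity of Hf
  have hHfcont : ContinuousOn Hf (Set.Ioo (1-ε) (1+ε)) := by
    intro t₀ ht₀
    apply ContinuousAt.continuousWithinAt
    rw [Metric.continuousAt_iff]
    intro e he
    set e' : ℝ := min (e/2) (δ/4) with he'def
    have he'0 : 0 < e' := lt_min (by linarith) (by linarith)
    have he'e : e' ≤ e/2 := min_le_left _ _
    have he'δ : e' ≤ δ/4 := min_le_right _ _
    obtain ⟨⟨hh₀1, hh₀2⟩, hval₀⟩ := hHfspec t₀ ht₀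
    obtain ⟨htb1, htb2⟩ := htbox t₀ ht₀
    have hb1 : 1-δ ≤ Hf t₀ - e' := by simp only [hε₁def] at hh₀1; linarith
    have hb2 : Hf t₀ + e' ≤ 1+δ := by simp only [hε₁def] at hh₀2; linarith
    have hgl : Real.sqrt (1 - a^2) < ∫ x in a..t₀, 1 / delaunayD (Hf t₀ - e') t₀ x := by
      rw [← hval₀]
      exact hanti t₀ htb1.le htb2.le (Hf t₀ - e') (Hf t₀) hb1 (by linarith)
        (hHfbox t₀ ht₀).1 (hHfbox t₀ ht₀).2 (by linarith)
    have hgu : (∫ x in a..t₀, 1 / delaunayD (Hf t₀ + e') t₀ x) < Real.sqrt (1 - a^2) := by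
      rw [← hval₀]
      exact hanti t₀ htb1.le htb2.le (Hf t₀) (Hf t₀ + e') (hHfbox t₀ ht₀).1 (hHfbox t₀ ht₀).2
        (by linarith) hb2 (by linarith)
    have hcl' := dl_contT (H := Hf t₀ - e') ha0 ha1 hδa hδ1a hδ0.le hb1 (by linarith)
      (t₀ := t₀) htb1 htb2
    have hcu' := dl_contT (H := Hf t₀ + e') ha0 ha1 hδa hδ1a hδ0.le (by linarith) hb2
      (t₀ := t₀) htb1 htb2
    have hev' : ∀ᶠ t in nhds t₀,
        ((Real.sqrt (1 - a^2) < ∫ x in a..t, 1 / delaunayD (Hf t₀ - e') t x)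
        ∧ (∫ x in a..t, 1 / delaunayD (Hf t₀ + e') t x) < Real.sqrt (1 - a^2))
        ∧ t ∈ Set.Ioo (1-ε) (1+ε) :=
      ((hcl'.eventually (eventually_gt_nhds hgl)).and
        (hcu'.eventually (eventually_lt_nhds hgu))).and
        (isOpen_Ioo.mem_nhds ht₀)
    obtain ⟨r', hr'0, hr'⟩ := Metric.eventually_nhds_iff.mp hev'
    refine ⟨r', hr'0, fun {t} hdist => ?_⟩
    obtain ⟨⟨hev1, hev2⟩, hmem⟩ := hr' hdist
    obtain ⟨⟨w1, w2⟩, hvalt⟩ := hHfspec t hmem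
    have hwb := hHfbox t hmem
    -- Hf t ∈ (Hf t₀ - e', Hf t₀ + e')
    have hlow : Hf t₀ - e' < Hf t := by
      by_contra hcon
      push_neg at hcon
      rcases lt_or_eq_of_le hcon with h | h
      · have := hanti t (htbox t hmem).1.le (htbox t hmem).2.le (Hf t) (Hf t₀ - e')
          hwb.1 hwb.2 hb1 (by linarith) h
        rw [hvalt] at this
        linarith
      · rw [← h] at hev1
        rw [hvalt] at hev1
        linarith
    have hhigh : Hf t < Hf t₀ + e' := by
      by_contra hcon
      push_neg at hcon
      rcases lt_or_eq_of_le hcon with h | h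
      · have := hanti t (htbox t hmem).1.le (htbox t hmem).2.le (Hf t₀ + e') (Hf t)
          (by linarith) hb2 hwb.1 hwb.2 h
        rw [hvalt] at this
        linarith
      · rw [h] at hev2
        rw [hvalt] at hev2
        linarith
    rw [Real.dist_eq, abs_lt]
    constructor <;> linarith
  -- finish
  refine ⟨ε, hε0, hεlt, Hf, hHfcont, hHf1, fun t ht => ⟨?_, ?_, ?_⟩⟩
  · intro x hx
    obtain ⟨hw1, hw2⟩ := hHfbox t ht
    obtain ⟨htb1, htb2⟩ := htbox t ht
    constructor
    · exact lt_of_lt_of_le (by positivity)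
        (dl_L1 ha0 ha1 hδa hδ1a hδ0.le hw1 hw2 htb1.le htb2.le hx.1.le hx.2.le)
    · nlinarith [dl_factor (H := Hf t) (t := t) (x := x),
        dl_L0 ha0 ha1 hδa hδ0.le hw1 htb1.le hx.1.le, hx.2]
  · exact (hHfspec t ht).2
  · rintro H' hH' ⟨-, hint⟩
    obtain ⟨htb1, htb2⟩ := htbox t ht
    exact huniq t htb1.le htb2.le H' (Hf t) (by linarith [hH'.1]) (by linarith [hH'.2])
      (hHfbox t ht).1 (hHfbox t ht).2 hint (hHfspec t ht).2
end
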